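/- arXiv:2305.00317 — 6 statements merged into one kernel-verified Lean document; each statement's English description precedes it below -/
import Mathlib

section
/- For a positive element A in a unital C*-algebra 𝔄 and X ∈ 𝔄, one has ‖X‖_A = 0 if and only if A X = 0, where ‖X‖_A = sup{√(f(X* A X)) : f a state on 𝔄 with f(A) ≠ 0, normalized so f(A) = 1}. -/
open scoped ComplexOrder ENNReal

/-- A state on a C*-algebra: a positive continuous linear functional of norm one. -/
def IsState {𝔄 : Type*} [NormedRing 𝔄] [StarRing 𝔄] [NormedAlgebra ℂ 𝔄]
    (f : 𝔄 →L[ℂ] ℂ) : Prop :=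
  ‖f‖ = 1 ∧ ∀ a : 𝔄, 0 ≤ f (star a * a)

/-- The `A`-operator seminorm `‖X‖_A`, as a value in `[0, ∞]`:
the supremum over states `f` with `f A ≠ 0` of `√(f(X* A X) / f(A))`. -/
noncomputable def Anorm {𝔄 : Type*} [NormedRing 𝔄] [StarRing 𝔄] [NormedAlgebra ℂ 𝔄]
    (A X : 𝔄) : ℝ≥0∞ :=
  ⨆ f : {f : 𝔄 →L[ℂ] ℂ // IsState f ∧ f A ≠ 0},
    ENNReal.ofReal (Real.sqrt ((f.1 (star X * A * X)).re / (f.1 A).re))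

section AuxAnorm
variable {𝔄 : Type*} [CStarAlgebra 𝔄] [PartialOrder 𝔄] [StarOrderedRing 𝔄]

/-- If a functional of norm at most one sends `1` to `1`, it is real on selfadjoint
elements. -/
lemma auxAnorm_im_eq_zero (f : 𝔄 →L[ℂ] ℂ) (hf : ‖f‖ ≤ 1) (hf1 : f 1 = 1)
    {a : 𝔄} (ha : IsSelfAdjoint a) : (f a).im = 0 := by
  have hnt : Nontrivial 𝔄 := ⟨⟨1, 0, fun h => by simp [h] at hf1⟩⟩
  have key : ∀ t : ℝ, ((f a).im + t) ^ 2 ≤ ‖a‖ ^ 2 + t ^ 2 := by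
    intro t
    set z : ℂ := (t : ℂ) * Complex.I with hz
    set c : 𝔄 := a + z • 1 with hc
    have hconj : star z = -z := by
      rw [hz]; simp [Complex.star_def, Complex.conj_ofReal]
    have hstar : star c = a - z • 1 := by
      rw [hc, star_add, star_smul, star_one, ha.star_eq, hconj, neg_smul,
        ← sub_eq_add_neg]
    have hzz : z * z = -((t : ℂ) ^ 2) := by
      rw [hz]; ring_nf; simp [Complex.I_sq]
    have hmul : star c * c = a * a + ((t : ℂ) ^ 2) • 1 := by
      have : star c * c = a * a - (z * z) • 1 := by
        rw [hstar, hc]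
        simp only [sub_mul, mul_add, smul_add, mul_smul_comm, smul_mul_assoc,
          one_mul, mul_one, smul_smul]
        module
      rw [this, hzz, neg_smul, sub_neg_eq_add]
    have hnc : ‖c‖ ^ 2 ≤ ‖a‖ ^ 2 + t ^ 2 := by
      have h1 : ‖star c * c‖ = ‖c‖ * ‖c‖ := CStarRing.norm_star_mul_self
      have h2 : ‖((t : ℂ) ^ 2) • (1 : 𝔄)‖ = t ^ 2 := by
        rw [norm_smul, norm_one, mul_one, norm_pow, Complex.norm_real,
          Real.norm_eq_abs, sq_abs]
      calc ‖c‖ ^ 2 = ‖star c * c‖ := by rw [h1]; ring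
        _ ≤ ‖a * a‖ + ‖((t : ℂ) ^ 2) • (1 : 𝔄)‖ := hmul ▸ norm_add_le _ _
        _ ≤ ‖a‖ ^ 2 + t ^ 2 := by
            have := norm_mul_le a a
            rw [h2]; nlinarith [norm_nonneg a]
    have hfc : f c = f a + z := by
      rw [hc, map_add, map_smul, hf1, smul_eq_mul, mul_one]
    have habs : ‖f c‖ ≤ ‖c‖ := by
      calc ‖f c‖ = ‖f c‖ := rfl
        _ ≤ ‖f‖ * ‖c‖ := f.le_opNorm c
        _ ≤ 1 * ‖c‖ := by gcongr
        _ = ‖c‖ := one_mul _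
    have h3 : ((f a).im + t) ^ 2 ≤ ‖f c‖ ^ 2 := by
      rw [Complex.sq_norm, Complex.normSq_apply, hfc]
      simp [hz]
      nlinarith [sq_nonneg ((f a).re)]
    calc ((f a).im + t) ^ 2 ≤ ‖f c‖ ^ 2 := h3
      _ ≤ ‖c‖ ^ 2 := by nlinarith [norm_nonneg (f c), norm_nonneg c]
      _ ≤ ‖a‖ ^ 2 + t ^ 2 := hnc
  by_contra hs
  have h := key (‖a‖ ^ 2 / (2 * (f a).im))
  have h2 : 2 * (f a).im * (‖a‖ ^ 2 / (2 * (f a).im)) = ‖a‖ ^ 2 := by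
    field_simp
  have hs2 : 0 < (f a).im ^ 2 :=
    lt_of_le_of_ne (sq_nonneg _) (Ne.symm (pow_ne_zero 2 hs))
  nlinarith [h, h2, hs2]

lemma auxAnorm_algebraMap_eq (r : ℝ) :
    (algebraMap ℝ 𝔄 r) = ((r : ℂ)) • (1 : 𝔄) := by
  rw [IsScalarTower.algebraMap_apply ℝ ℂ 𝔄, Algebra.algebraMap_eq_smul_one]
  rfl

/-- A functional of norm at most one sending `1` to `1` is positive. -/
lemma auxAnorm_nonneg (f : 𝔄 →L[ℂ] ℂ) (hf : ‖f‖ ≤ 1) (hf1 : f 1 = 1)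
    {b : 𝔄} (hb : 0 ≤ b) : 0 ≤ f b := by
  have hbsa : IsSelfAdjoint b := .of_nonneg hb
  have him : (f b).im = 0 := auxAnorm_im_eq_zero f hf hf1 hbsa
  set c : 𝔄 := algebraMap ℝ 𝔄 ‖b‖ - b with hc
  have hc0 : 0 ≤ c := sub_nonneg.mpr hbsa.le_algebraMap_norm_self
  have hcle : c ≤ algebraMap ℝ 𝔄 ‖b‖ := by
    rw [hc]; exact sub_le_self _ hb
  have hnc : ‖c‖ ≤ ‖b‖ := by
    rw [CStarAlgebra.norm_le_iff_le_algebraMap c (norm_nonneg b) hc0]; exact hcle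
  have hfc : f c = (‖b‖ : ℂ) - f b := by
    rw [hc, map_sub, auxAnorm_algebraMap_eq, map_smul, hf1, smul_eq_mul, mul_one]
  have habs : ‖f c‖ ≤ ‖b‖ := by
    calc ‖f c‖ = ‖f c‖ := rfl
      _ ≤ ‖f‖ * ‖c‖ := f.le_opNorm c
      _ ≤ 1 * ‖b‖ := by gcongr
      _ = ‖b‖ := one_mul _
  have hre : 0 ≤ (f b).re := by
    have h1 : (f c).re = ‖b‖ - (f b).re := by rw [hfc]; simp
    have h2 : (f c).re ≤ ‖f c‖ := Complex.re_le_norm _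
    linarith
  rw [Complex.nonneg_iff]
  exact ⟨hre, him.symm⟩

/-- Every nonzero nonnegative element of a unital C*-algebra admits a norming state. -/
lemma auxAnorm_exists_norming [Nontrivial 𝔄] {b : 𝔄} (hb : 0 ≤ b) (hb0 : b ≠ 0) :
    ∃ f : 𝔄 →L[ℂ] ℂ, IsState f ∧ f 1 = 1 ∧ f b = (‖b‖ : ℂ) := by
  have hbn : (0 : ℝ) < ‖b‖ := norm_pos_iff.mpr hb0
  set c : 𝔄 := algebraMap ℝ 𝔄 ‖b‖ + b with hc
  have hmem : ‖b‖ + ‖b‖ ∈ spectrum ℝ c := by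
    rw [hc, ← spectrum.singleton_add_eq]
    exact Set.add_mem_add rfl (CStarAlgebra.norm_mem_spectrum_of_nonneg hb)
  have hge : 2 * ‖b‖ ≤ ‖c‖ := by
    have h := spectrum.norm_le_norm_of_mem hmem
    rw [Real.norm_eq_abs, abs_of_nonneg (by positivity)] at h
    linarith
  have hle : ‖c‖ ≤ 2 * ‖b‖ := by
    calc ‖c‖ ≤ ‖algebraMap ℝ 𝔄 ‖b‖‖ + ‖b‖ := norm_add_le _ _
      _ ≤ 2 * ‖b‖ := by
          rw [norm_algebraMap']
          rw [Real.norm_eq_abs, abs_of_nonneg hbn.le]; ring_nf; rfl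
  have hcnorm : ‖c‖ = 2 * ‖b‖ := le_antisymm hle hge
  have hc0 : c ≠ 0 := by
    intro h
    rw [h, norm_zero] at hcnorm
    linarith
  obtain ⟨g, hg1, hgc⟩ := exists_dual_vector ℂ c (norm_ne_zero_iff.mpr hc0)
  have hgc' := hgc
  rw [hcnorm] at hgc'
  rw [hc, map_add, auxAnorm_algebraMap_eq, map_smul, smul_eq_mul] at hgc'
  have habs1 : ‖g 1‖ ≤ 1 := by
    calc ‖g 1‖ = ‖g 1‖ := rfl
      _ ≤ ‖g‖ * ‖(1 : 𝔄)‖ := g.le_opNorm 1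
      _ = 1 := by rw [hg1, norm_one, mul_one]
  have habsb : ‖g b‖ ≤ ‖b‖ := by
    calc ‖g b‖ = ‖g b‖ := rfl
      _ ≤ ‖g‖ * ‖b‖ := g.le_opNorm b
      _ = ‖b‖ := by rw [hg1, one_mul]
  have hre : ‖b‖ * (g 1).re + (g b).re = 2 * ‖b‖ := by
    have h := congrArg Complex.re hgc'
    simpa using h
  have hre1 : (g 1).re = 1 := by
    nlinarith [Complex.re_le_norm (g 1), Complex.re_le_norm (g b)]
  have hreb : (g b).re = ‖b‖ := by
    nlinarith [Complex.re_le_norm (g 1), Complex.re_le_norm (g b)]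
  have hg1' : g 1 = 1 := by
    have hsq : (g 1).re ^ 2 + (g 1).im ^ 2 ≤ 1 := by
      have := Complex.sq_norm (g 1)
      rw [Complex.normSq_apply] at this
      nlinarith [norm_nonneg (g 1)]
    have him : (g 1).im = 0 := by nlinarith [sq_nonneg ((g 1).im)]
    apply Complex.ext <;> simp [hre1, him]
  have hgb' : g b = (‖b‖ : ℂ) := by
    have hsq : (g b).re ^ 2 + (g b).im ^ 2 ≤ ‖b‖ ^ 2 := by
      have := Complex.sq_norm (g b)
      rw [Complex.normSq_apply] at this
      nlinarith [norm_nonneg (g b)]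
    have him : (g b).im = 0 := by nlinarith [sq_nonneg ((g b).im)]
    apply Complex.ext <;> simp [hreb, him]
  refine ⟨g, ⟨hg1, fun a => ?_⟩, hg1', hgb'⟩
  exact auxAnorm_nonneg g hg1.le hg1' (star_mul_self_nonneg a)

lemma auxAnorm_state_nonneg {f : 𝔄 →L[ℂ] ℂ} (hf : IsState f) {b : 𝔄} (hb : 0 ≤ b) :
    0 ≤ f b := by
  have h := hf.2 (CFC.sqrt b)
  rwa [(IsSelfAdjoint.of_nonneg (CFC.sqrt_nonneg b)).star_eq,
    CFC.sqrt_mul_sqrt_self b hb] at h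

end AuxAnorm

set_option maxHeartbeats 1000000 in
theorem anorm_eq_zero_iff {𝔄 : Type*} [CStarAlgebra 𝔄] [PartialOrder 𝔄] [StarOrderedRing 𝔄]
    (A X : 𝔄) (hA : 0 ≤ A) (hA0 : A ≠ 0) :
    Anorm A X = 0 ↔ A * X = 0 := by
  have hnt : Nontrivial 𝔄 := nontrivial_of_ne A 0 hA0
  constructor
  · intro h
    rw [Anorm, ENNReal.iSup_eq_zero] at h
    have hB : (0 : 𝔄) ≤ star X * A * X := star_left_conjugate_nonneg hA X
    have hB0 : star X * A * X = 0 := by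
      by_contra hBne
      obtain ⟨g, hgS, hg1, hgB⟩ := auxAnorm_exists_norming hB hBne
      obtain ⟨g0, hg0S, hg01, hg0A⟩ := auxAnorm_exists_norming hA hA0
      set m : 𝔄 →L[ℂ] ℂ := ((2⁻¹ : ℝ) : ℂ) • g + ((2⁻¹ : ℝ) : ℂ) • g0 with hm
      have hmapp : ∀ x : 𝔄, m x = ((2⁻¹ : ℝ) : ℂ) * g x + ((2⁻¹ : ℝ) : ℂ) * g0 x :=
        fun x => by simp [hm, smul_eq_mul]
      have half_nonneg : (0 : ℂ) ≤ ((2⁻¹ : ℝ) : ℂ) := by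
        rw [Complex.nonneg_iff]; norm_num
      have hmpos : ∀ a : 𝔄, 0 ≤ m (star a * a) := by
        intro a
        rw [hmapp]
        exact add_nonneg (mul_nonneg half_nonneg (hgS.2 a))
          (mul_nonneg half_nonneg (hg0S.2 a))
      have hm1 : m 1 = 1 := by
        rw [hmapp, hg1, hg01]
        norm_num
      have hmnorm : ‖m‖ = 1 := by
        apply le_antisymm
        · refine m.opNorm_le_bound zero_le_one fun x => ?_
          have hgx := g.le_opNorm x
          have hg0x := g0.le_opNorm x
          rw [hgS.1, one_mul] at hgx
          rw [hg0S.1, one_mul] at hg0x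
          have e1 : ‖((2⁻¹ : ℝ) : ℂ) * g x‖ = 2⁻¹ * ‖g x‖ := by
            rw [norm_mul, Complex.norm_real]; norm_num
          have e2 : ‖((2⁻¹ : ℝ) : ℂ) * g0 x‖ = 2⁻¹ * ‖g0 x‖ := by
            rw [norm_mul, Complex.norm_real]; norm_num
          calc ‖m x‖ ≤ ‖((2⁻¹ : ℝ) : ℂ) * g x‖ + ‖((2⁻¹ : ℝ) : ℂ) * g0 x‖ := by
                rw [hmapp]; exact norm_add_le _ _
            _ ≤ 1 * ‖x‖ := by rw [e1, e2]; linarith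

        · have h1 : ‖m 1‖ ≤ ‖m‖ * ‖(1 : 𝔄)‖ := m.le_opNorm 1
          rw [hm1] at h1
          simpa using h1
      have hmS : IsState m := ⟨hmnorm, hmpos⟩
      have hArepos : 0 < (m A).re := by
        have h1 : 0 ≤ (g A).re := (Complex.nonneg_iff.mp (auxAnorm_state_nonneg hgS hA)).1
        have h2 : (g0 A).re = ‖A‖ := by rw [hg0A]; simp
        have h3 : 0 < ‖A‖ := norm_pos_iff.mpr hA0
        rw [hmapp, Complex.add_re, Complex.re_ofReal_mul, Complex.re_ofReal_mul, h2]
        nlinarith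
      have hmA : m A ≠ 0 := by
        intro h'
        rw [h'] at hArepos
        simp at hArepos
      have hBrepos : 0 < (m (star X * A * X)).re := by
        have h1 : (g (star X * A * X)).re = ‖star X * A * X‖ := by rw [hgB]; simp
        have h2 : 0 ≤ (g0 (star X * A * X)).re :=
          (Complex.nonneg_iff.mp (auxAnorm_state_nonneg hg0S hB)).1
        have h3 : 0 < ‖star X * A * X‖ := norm_pos_iff.mpr hBne
        rw [hmapp, Complex.add_re, Complex.re_ofReal_mul, Complex.re_ofReal_mul, h1]
        nlinarith
      have hterm := h ⟨m, hmS, hmA⟩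
      rw [ENNReal.ofReal_eq_zero] at hterm
      have hratio : 0 < (m (star X * A * X)).re / (m A).re := div_pos hBrepos hArepos
      have := Real.sqrt_pos.mpr hratio
      simp only at hterm
      linarith
    have hsq := CFC.sqrt_mul_sqrt_self A hA
    have hfact : star (CFC.sqrt A * X) * (CFC.sqrt A * X) = star X * A * X := by
      rw [star_mul, (IsSelfAdjoint.of_nonneg (CFC.sqrt_nonneg (a := A))).star_eq,
        mul_assoc (star X), ← mul_assoc (CFC.sqrt A), hsq, ← mul_assoc]
    have hsX : CFC.sqrt A * X = 0 := by
      rw [← CStarRing.star_mul_self_eq_zero_iff (CFC.sqrt A * X), hfact]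
      exact hB0
    calc A * X = CFC.sqrt A * CFC.sqrt A * X := by rw [hsq]
      _ = CFC.sqrt A * (CFC.sqrt A * X) := mul_assoc _ _ _
      _ = 0 := by rw [hsX, mul_zero]
  · intro hAX
    rw [Anorm, ENNReal.iSup_eq_zero]
    intro f
    have hB0 : star X * A * X = 0 := by rw [mul_assoc, hAX, mul_zero]
    rw [hB0, map_zero]
    simp
end

section
/- For X in a unital C*-algebra 𝔄 and positive A ∈ 𝔄, X ∈ 𝔄^A (i.e. ‖X‖_A < ∞) if and only if there exist c > 0 and U ∈ 𝔄 with A^{1/2} X = U A^{1/4} and U* U ≤ c A^{1/2}. -/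
open scoped ComplexOrder ENNReal

/-!
`‖X‖_A < ∞` says that `f (X* A X) ≤ c f (A)` for every state with `f A ≠ 0`. States detect
positivity (a norm-one functional with `g 1 = 1` is positive, and Hahn–Banach extends a character
of the C⋆-algebra generated by a self-adjoint element), and the states with `f A = 0` are limits
of normalised `f + t k` with `k A = ‖A‖`; so `‖X‖_A < ∞` iff `X* A X ≤ c A` for some `c > 0`.

With `b = A^{1/2} X` and `r = A^{1/4}` this reads `b* b ≤ c r⁴`. Conjugating gives
`‖b φ(r)‖² ≤ c sup φ(s)² s⁴` on the spectrum, so for the regularised inverses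
`φ_ε(s) = s / (s² + ε)` the elements `b φ_ε(r)` form a Cauchy sequence whose limit `U` satisfies
`U r = b` and `U* U ≤ c r²` (Blackadar, II.3.2.1).
-/

section NormedAlgebra

variable {𝔄 : Type*} [NormedRing 𝔄] [StarRing 𝔄] [NormedAlgebra ℂ 𝔄]

lemma isState_inv_norm_smul {F : 𝔄 →L[ℂ] ℂ} (hF0 : F ≠ 0) (hF : ∀ a, 0 ≤ F (star a * a)) :
    IsState (((‖F‖⁻¹ : ℝ) : ℂ) • F) := by
  have hn : 0 < ‖F‖ := norm_pos_iff.2 hF0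
  refine ⟨?_, fun a => ?_⟩
  · rw [norm_smul, Complex.norm_real, Real.norm_eq_abs, abs_inv, abs_of_pos hn,
      inv_mul_cancel₀ hn.ne']
  · exact mul_nonneg (by exact_mod_cast (inv_pos.2 hn).le) (hF a)

lemma ofReal_sqrt_le_Anorm {A X : 𝔄} {f : 𝔄 →L[ℂ] ℂ} (hf : IsState f) (hfA : f A ≠ 0) :
    ENNReal.ofReal √((f (star X * A * X)).re / (f A).re) ≤ Anorm A X :=
  le_iSup (fun g : {g : 𝔄 →L[ℂ] ℂ // IsState g ∧ g A ≠ 0} =>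
    ENNReal.ofReal √((g.1 (star X * A * X)).re / (g.1 A).re)) ⟨f, hf, hfA⟩

end NormedAlgebra

section CStarAlgebra

variable {𝔄 : Type*} [CStarAlgebra 𝔄]

lemma norm_add_smul_I_sq_le [Nontrivial 𝔄] {x : 𝔄} (hx : IsSelfAdjoint x) (t : ℝ) :
    ‖x + (t * Complex.I) • 1‖ ^ 2 ≤ ‖x‖ ^ 2 + t ^ 2 := by
  have hstar : star (x + (t * Complex.I) • 1) * (x + (t * Complex.I) • 1)
      = x * x + ((t : ℂ) ^ 2) • 1 := by
    simp only [star_add, star_smul, star_one, hx.star_eq, star_mul', Complex.star_def,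
      Complex.conj_ofReal, Complex.conj_I, add_mul, mul_add, smul_mul_assoc, mul_smul_comm,
      mul_one, one_mul, smul_add, smul_smul]
    have hI : (t : ℂ) * Complex.I * (t * -Complex.I) = (t : ℂ) ^ 2 := by
      linear_combination (-(t : ℂ) ^ 2) * Complex.I_sq
    rw [hI]
    module
  calc ‖x + (t * Complex.I) • 1‖ ^ 2
      = ‖star (x + (t * Complex.I) • 1) * (x + (t * Complex.I) • 1)‖ := by
        rw [CStarRing.norm_star_mul_self, sq]
    _ ≤ ‖x * x‖ + ‖((t : ℂ) ^ 2) • (1 : 𝔄)‖ := hstar ▸ norm_add_le _ _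
    _ = ‖x‖ ^ 2 + t ^ 2 := by simp [hx.norm_mul_self, norm_smul, sq]

lemma im_apply_eq_zero_of_norm_le_one {f : 𝔄 →L[ℂ] ℂ} (hf : ‖f‖ ≤ 1) (h1 : f 1 = 1)
    {x : 𝔄} (hx : IsSelfAdjoint x) : (f x).im = 0 := by
  have : Nontrivial 𝔄 := nontrivial_of_ne 1 0 fun h => by simp [h] at h1
  have key : ∀ t : ℝ, (f x).re ^ 2 + ((f x).im + t) ^ 2 ≤ ‖x‖ ^ 2 + t ^ 2 := by
    intro t
    have happ : f (x + (t * Complex.I) • 1) = f x + t * Complex.I := by simp [h1]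
    have hle : ‖f x + t * Complex.I‖ ≤ ‖x + (t * Complex.I) • 1‖ := by
      rw [← happ]
      exact (f.le_opNorm _).trans (mul_le_of_le_one_left (norm_nonneg _) hf)
    calc (f x).re ^ 2 + ((f x).im + t) ^ 2 = ‖f x + t * Complex.I‖ ^ 2 := by
          rw [Complex.sq_norm, Complex.normSq_apply]; simp; ring
      _ ≤ ‖x + (t * Complex.I) • 1‖ ^ 2 := by gcongr
      _ ≤ ‖x‖ ^ 2 + t ^ 2 := norm_add_smul_I_sq_le hx t
  by_contra him
  -- at `2 t im = ‖x‖² + 1 - re² - im²` the inequality `key t` reads `‖x‖² + 1 ≤ ‖x‖²`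
  have hdiv := mul_div_cancel₀ (‖x‖ ^ 2 + 1 - (f x).re ^ 2 - (f x).im ^ 2)
    (mul_ne_zero two_ne_zero him)
  nlinarith [key ((‖x‖ ^ 2 + 1 - (f x).re ^ 2 - (f x).im ^ 2) / (2 * (f x).im))]

end CStarAlgebra

section StarOrderedRing

variable {𝔄 : Type*} [CStarAlgebra 𝔄] [PartialOrder 𝔄] [StarOrderedRing 𝔄]

namespace IsState

variable {f : 𝔄 →L[ℂ] ℂ}

lemma apply_nonneg (hf : IsState f) {a : 𝔄} (ha : 0 ≤ a) : 0 ≤ f a := by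
  obtain ⟨b, rfl⟩ := CStarAlgebra.nonneg_iff_eq_star_mul_self.mp ha
  exact hf.2 b

lemma re_le_re (hf : IsState f) {a b : 𝔄} (hab : a ≤ b) : (f a).re ≤ (f b).re := by
  have h := hf.apply_nonneg (sub_nonneg.2 hab)
  rw [map_sub, sub_nonneg] at h
  exact (Complex.le_def.1 h).1

lemma re_pos (hf : IsState f) {a : 𝔄} (ha : 0 ≤ a) (hfa : f a ≠ 0) : 0 < (f a).re :=
  (Complex.lt_def.1 (lt_of_le_of_ne (hf.apply_nonneg ha) hfa.symm)).1

end IsState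

lemma norm_sub_algebraMap_half_norm_le [Nontrivial 𝔄] {x : 𝔄} (hx : 0 ≤ x) :
    ‖x - algebraMap ℝ 𝔄 (‖x‖ / 2)‖ ≤ ‖x‖ / 2 := by
  have hcfc : cfc (fun s : ℝ => s - ‖x‖ / 2) x = x - algebraMap ℝ 𝔄 (‖x‖ / 2) := by
    rw [cfc_sub (fun s => s) (fun _ => ‖x‖ / 2) x, cfc_id' ℝ x, cfc_const (‖x‖ / 2) x]
  rw [← hcfc]
  refine norm_cfc_le (by positivity) fun s hs => ?_
  have hs0 : 0 ≤ s := spectrum_nonneg_of_nonneg hx hs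
  have hs1 : s ≤ ‖x‖ := (le_abs_self s).trans (by simpa using spectrum.norm_le_norm_of_mem hs)
  rw [Real.norm_eq_abs, abs_le]
  constructor <;> linarith

lemma apply_nonneg_of_norm_le_one {f : 𝔄 →L[ℂ] ℂ} (hf : ‖f‖ ≤ 1) (h1 : f 1 = 1)
    {x : 𝔄} (hx : 0 ≤ x) : 0 ≤ f x := by
  have : Nontrivial 𝔄 := nontrivial_of_ne 1 0 fun h => by simp [h] at h1
  have him := im_apply_eq_zero_of_norm_le_one hf h1 hx.isSelfAdjoint
  have hre : ‖f x - (‖x‖ / 2 : ℝ)‖ ≤ ‖x‖ / 2 := by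
    have happ : f (x - algebraMap ℝ 𝔄 (‖x‖ / 2)) = f x - (‖x‖ / 2 : ℝ) := by
      simp [Algebra.algebraMap_eq_smul_one, h1]
    rw [← happ]
    exact (f.le_opNorm _).trans (mul_le_of_le_one_left (norm_nonneg _) hf |>.trans
      (norm_sub_algebraMap_half_norm_le hx))
  rw [← Complex.re_add_im (f x), him, Complex.ofReal_zero, zero_mul, add_zero,
    ← Complex.ofReal_sub, Complex.norm_real, Real.norm_eq_abs] at hre
  rw [Complex.le_def]
  exact ⟨by simpa using (abs_le.1 hre).1, him.symm⟩

lemma isState_of_norm_le_one {f : 𝔄 →L[ℂ] ℂ} (hf : ‖f‖ ≤ 1) (h1 : f 1 = 1) : IsState f := by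
  have : Nontrivial 𝔄 := nontrivial_of_ne 1 0 fun h => by simp [h] at h1
  refine ⟨le_antisymm hf ?_, fun a => apply_nonneg_of_norm_le_one hf h1 (star_mul_self_nonneg a)⟩
  simpa [h1] using f.le_opNorm 1

lemma exists_isState_apply_eq (a : 𝔄) [IsStarNormal a] {z : ℂ} (hz : z ∈ spectrum ℂ a) :
    ∃ g : 𝔄 →L[ℂ] ℂ, IsState g ∧ g a = z := by
  have : Nontrivial 𝔄 := by
    by_contra h
    rw [not_nontrivial_iff_subsingleton] at h
    simp [spectrum.of_subsingleton] at hz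
  obtain ⟨φ, hφ⟩ := (StarAlgebra.elemental.bijective_characterSpaceToSpectrum a).2 ⟨z, hz⟩
  obtain ⟨g, hg, hgn⟩ := exists_extension_norm_eq
    (StarAlgebra.elemental ℂ a).toSubalgebra.toSubmodule (WeakDual.toStrongDual (φ : WeakDual ℂ _))
  refine ⟨g, isState_of_norm_le_one ?_ ?_, ?_⟩
  · rw [hgn]
    exact (WeakDual.CharacterSpace.norm_le_norm_one φ).trans_eq norm_one
  · exact (hg ⟨1, (StarAlgebra.elemental ℂ a).one_mem⟩).trans (map_one φ)
  · exact (hg ⟨a, StarAlgebra.elemental.self_mem ℂ a⟩).trans (congrArg Subtype.val hφ)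

lemma nonneg_of_forall_isState {s : 𝔄} (hs : IsSelfAdjoint s)
    (h : ∀ g : 𝔄 →L[ℂ] ℂ, IsState g → 0 ≤ (g s).re) : 0 ≤ s := by
  have := hs.isStarNormal
  rw [StarOrderedRing.nonneg_iff_spectrum_nonneg (R := ℝ) s hs]
  intro t ht
  obtain ⟨g, hg, hgs⟩ := exists_isState_apply_eq s (spectrum.algebraMap_mem ℂ ht)
  simpa [hgs] using h g hg

lemma nonneg_of_forall_isState_apply_ne_zero {s z : 𝔄} (hs : IsSelfAdjoint s) (hz : 0 ≤ z)
    (hz0 : z ≠ 0) (h : ∀ g : 𝔄 →L[ℂ] ℂ, IsState g → g z ≠ 0 → 0 ≤ (g s).re) : 0 ≤ s := by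
  have : Nontrivial 𝔄 := nontrivial_of_ne z 0 hz0
  have := hz.isSelfAdjoint.isStarNormal
  obtain ⟨k, hk, hkz⟩ := exists_isState_apply_eq z
    (spectrum.algebraMap_mem ℂ (CStarAlgebra.norm_mem_spectrum_of_nonneg hz))
  have hkz' : 0 < k z := by simpa [hkz] using norm_pos_iff.2 hz0
  refine nonneg_of_forall_isState hs fun f hf => ?_
  -- the states proportional to `f + t k` do not vanish at `z`
  have hmix : ∀ t : ℝ, 0 < t → 0 ≤ (f s).re + t * (k s).re := by
    intro t ht
    set F := f + (t : ℂ) • k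
    have hFz : 0 < F z := by
      simpa [F] using add_pos_of_nonneg_of_pos (hf.apply_nonneg hz)
        (mul_pos (by exact_mod_cast ht) hkz')
    have hF : ∀ a, 0 ≤ F (star a * a) := fun a => by
      simpa [F] using add_nonneg (hf.2 a) (mul_nonneg (by exact_mod_cast ht.le) (hk.2 a))
    have hF0 : F ≠ 0 := fun h0 => by simp [h0] at hFz
    have hn : 0 < ‖F‖⁻¹ := inv_pos.2 (norm_pos_iff.2 hF0)
    have hGz : (((‖F‖⁻¹ : ℝ) : ℂ) • F) z ≠ 0 :=
      mul_ne_zero (by exact_mod_cast hn.ne') hFz.ne'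
    have hGs := h _ (isState_inv_norm_smul hF0 hF) hGz
    have hFs : (F s).re = (f s).re + t * (k s).re := by simp [F]
    rw [smul_apply, smul_eq_mul, Complex.re_ofReal_mul, hFs] at hGs
    exact nonneg_of_mul_nonneg_right (by linarith) hn
  have hlim : Filter.Tendsto (fun t : ℝ => (f s).re + t * (k s).re) (nhdsWithin 0 (Set.Ioi 0))
      (nhds (f s).re) :=
    tendsto_nhdsWithin_of_tendsto_nhds
      ((by fun_prop : Continuous fun t : ℝ => (f s).re + t * (k s).re).tendsto' 0 _ (by simp))
  exact ge_of_tendsto hlim (eventually_nhdsWithin_of_forall hmix)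

lemma re_apply_le_of_Anorm_ne_top {A X : 𝔄} (hA : 0 ≤ A) (h : Anorm A X ≠ ⊤)
    {f : 𝔄 →L[ℂ] ℂ} (hf : IsState f) (hfA : f A ≠ 0) :
    (f (star X * A * X)).re ≤ (Anorm A X).toReal ^ 2 * (f A).re := by
  have hsqrt := ENNReal.toReal_mono h (ofReal_sqrt_le_Anorm (X := X) hf hfA)
  rw [ENNReal.toReal_ofReal (Real.sqrt_nonneg _), Real.sqrt_le_left ENNReal.toReal_nonneg,
    div_le_iff₀ (hf.re_pos hA hfA)] at hsqrt
  exact hsqrt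

lemma Anorm_le_ofReal_sqrt {A X : 𝔄} (hA : 0 ≤ A) {c : ℝ} (h : star X * A * X ≤ c • A) :
    Anorm A X ≤ ENNReal.ofReal √c := by
  refine iSup_le fun ⟨f, hf, hfA⟩ => ENNReal.ofReal_le_ofReal (Real.sqrt_le_sqrt ?_)
  rw [div_le_iff₀ (hf.re_pos hA hfA)]
  simpa [ContinuousLinearMap.map_smul_of_tower] using hf.re_le_re h

lemma Anorm_ne_top_iff {A X : 𝔄} (hA : 0 ≤ A) :
    Anorm A X ≠ ⊤ ↔ ∃ c : ℝ, 0 < c ∧ star X * A * X ≤ c • A := by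
  refine ⟨fun h => ?_, fun ⟨c, _, hc⟩ => ne_top_of_le_ne_top ENNReal.ofReal_ne_top
    (Anorm_le_ofReal_sqrt hA hc)⟩
  rcases eq_or_ne A 0 with rfl | hA0
  · exact ⟨1, one_pos, by simp⟩
  refine ⟨(Anorm A X).toReal ^ 2 + 1, by positivity, sub_nonneg.1 ?_⟩
  refine nonneg_of_forall_isState_apply_ne_zero ?_ hA hA0 fun g hg hgA => ?_
  · exact ((IsSelfAdjoint.all _).smul hA.isSelfAdjoint).sub (hA.isSelfAdjoint.conjugate' X)
  have h1 := re_apply_le_of_Anorm_ne_top hA h hg hgA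
  have h2 := hg.re_pos hA hgA
  simp only [map_sub, ContinuousLinearMap.map_smul_of_tower, Complex.sub_re, Complex.smul_re,
    smul_eq_mul]
  nlinarith

end StarOrderedRing

noncomputable def regInv (ε s : ℝ) : ℝ := s / (s ^ 2 + ε)

lemma continuous_regInv {ε : ℝ} (hε : 0 < ε) : Continuous (regInv ε) :=
  continuous_id.div (by fun_prop) fun s => (add_pos_of_nonneg_of_pos (sq_nonneg s) hε).ne'

lemma regInv_sq_mul_pow_four_le {ε : ℝ} (hε : 0 < ε) (s : ℝ) :
    regInv ε s ^ 2 * s ^ 4 ≤ s ^ 2 := by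
  have h : s ^ 4 ≤ (s ^ 2 + ε) ^ 2 := by nlinarith [sq_nonneg s]
  rw [regInv, div_pow, div_mul_eq_mul_div, div_le_iff₀ (by positivity)]
  nlinarith [mul_le_mul_of_nonneg_left h (sq_nonneg s)]

lemma regInv_mul_self_sub_one_sq_mul_pow_four_le {ε : ℝ} (hε : 0 < ε) (s : ℝ) :
    (regInv ε s * s - 1) ^ 2 * s ^ 4 ≤ ε ^ 2 := by
  have hp : 0 < s ^ 2 + ε := by positivity
  have h : regInv ε s * s - 1 = -ε / (s ^ 2 + ε) := by rw [regInv]; field_simp; ring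
  have h4 : s ^ 4 ≤ (s ^ 2 + ε) ^ 2 := by nlinarith [sq_nonneg s]
  rw [h, div_pow, div_mul_eq_mul_div, div_le_iff₀ (by positivity)]
  nlinarith [sq_nonneg ε]

lemma regInv_sub_regInv_sq_mul_pow_four_le {ε δ : ℝ} (hε : 0 < ε) (hδ : 0 < δ) (s : ℝ) :
    (regInv ε s - regInv δ s) ^ 2 * s ^ 4 ≤ max ε δ := by
  wlog hεδ : ε ≤ δ generalizing ε δ
  · rw [max_comm, ← neg_sub, neg_sq]
    exact this hδ hε (le_of_not_ge hεδ)
  have hx : 0 ≤ s ^ 2 := sq_nonneg s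
  have h : regInv ε s - regInv δ s = s * (δ - ε) / ((s ^ 2 + ε) * (s ^ 2 + δ)) := by
    rw [regInv, regInv]; field_simp; ring
  have h1 : (δ - ε) ^ 2 ≤ δ ^ 2 := by nlinarith
  have h2 : (s ^ 2) ^ 2 ≤ (s ^ 2 + ε) ^ 2 := by nlinarith
  have h3 : s ^ 2 * δ ≤ (s ^ 2 + δ) ^ 2 := by nlinarith
  rw [h, max_eq_right hεδ, div_pow, div_mul_eq_mul_div, div_le_iff₀ (by positivity)]
  calc (s * (δ - ε)) ^ 2 * s ^ 4 = (s ^ 2) ^ 2 * (s ^ 2 * (δ - ε) ^ 2) := by ring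
    _ ≤ (s ^ 2 + ε) ^ 2 * ((s ^ 2 + δ) ^ 2 * δ) := by
        refine mul_le_mul h2 ?_ (by positivity) (by positivity)
        nlinarith [mul_le_mul_of_nonneg_left h1 hx, mul_le_mul_of_nonneg_right h3 hδ.le]
    _ = δ * ((s ^ 2 + ε) * (s ^ 2 + δ)) ^ 2 := by ring

section Factorization

variable {𝔄 : Type*} [CStarAlgebra 𝔄] [PartialOrder 𝔄] [StarOrderedRing 𝔄] {r b : 𝔄} {c : ℝ}

lemma star_mul_cfc_mul_le (hr : IsSelfAdjoint r) (hb : star b * b ≤ c • r ^ 4)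
    {φ : ℝ → ℝ} (hφ : Continuous φ) :
    star (b * cfc φ r) * (b * cfc φ r) ≤ c • cfc (fun s => φ s ^ 2 * s ^ 4) r := by
  have hcfc : cfc (fun s => φ s ^ 2 * s ^ 4) r = cfc φ r * r ^ 4 * cfc φ r := by
    rw [← cfc_pow_id (R := ℝ) r 4, ← cfc_mul φ _ r hφ.continuousOn,
      ← cfc_mul _ φ r (by fun_prop) hφ.continuousOn]
    exact cfc_congr fun s _ => by ring
  calc star (b * cfc φ r) * (b * cfc φ r) = star (cfc φ r) * (star b * b) * cfc φ r := by
        rw [star_mul]; noncomm_ring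
    _ ≤ star (cfc φ r) * (c • r ^ 4) * cfc φ r := star_left_conjugate_le_conjugate hb _
    _ = c • cfc (fun s => φ s ^ 2 * s ^ 4) r := by
        rw [hcfc, (cfc_predicate φ r).star_eq, mul_smul_comm, smul_mul_assoc]

lemma norm_mul_cfc_sq_le (hr : IsSelfAdjoint r) (hc : 0 ≤ c) (hb : star b * b ≤ c • r ^ 4)
    {φ : ℝ → ℝ} (hφ : Continuous φ) {K : ℝ} (hK : 0 ≤ K)
    (hφK : ∀ s ∈ spectrum ℝ r, φ s ^ 2 * s ^ 4 ≤ K) : ‖b * cfc φ r‖ ^ 2 ≤ c * K := by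
  calc ‖b * cfc φ r‖ ^ 2 = ‖star (b * cfc φ r) * (b * cfc φ r)‖ := by
        rw [CStarRing.norm_star_mul_self, sq]
    _ ≤ ‖c • cfc (fun s => φ s ^ 2 * s ^ 4) r‖ :=
        CStarAlgebra.norm_le_norm_of_nonneg_of_le (star_mul_self_nonneg _)
          (star_mul_cfc_mul_le hr hb hφ)
    _ ≤ c * K := by
        rw [norm_smul, Real.norm_of_nonneg hc]
        refine mul_le_mul_of_nonneg_left (norm_cfc_le hK fun s hs => ?_) hc
        rw [Real.norm_of_nonneg (by positivity)]
        exact hφK s hs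

lemma exists_eq_mul_of_star_mul_self_le (hr : IsSelfAdjoint r) (hc : 0 ≤ c)
    (hb : star b * b ≤ c • r ^ 4) : ∃ U : 𝔄, b = U * r ∧ star U * U ≤ c • r ^ 2 := by
  set ε : ℕ → ℝ := fun n => 1 / (n + 1)
  have hε : ∀ n, 0 < ε n := fun n => Nat.one_div_pos_of_nat
  have hε_tendsto : Filter.Tendsto ε Filter.atTop (nhds 0) :=
    tendsto_one_div_add_atTop_nhds_zero_nat
  set u : ℕ → 𝔄 := fun n => b * cfc (regInv (ε n)) r
  have hu : CauchySeq u := by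
    refine cauchySeq_of_le_tendsto_0 (fun N => √(c * ε N)) (fun m n N hm hn => ?_) ?_
    · have hmn : max (ε m) (ε n) ≤ ε N :=
        max_le (Nat.one_div_le_one_div hm) (Nat.one_div_le_one_div hn)
      rw [dist_eq_norm, ← mul_sub, ← cfc_sub _ _ r (continuous_regInv (hε m)).continuousOn
        (continuous_regInv (hε n)).continuousOn]
      refine Real.le_sqrt_of_sq_le (norm_mul_cfc_sq_le hr hc hb
        ((continuous_regInv (hε m)).sub (continuous_regInv (hε n))) (hε N).le fun s _ => ?_)
      exact (regInv_sub_regInv_sq_mul_pow_four_le (hε m) (hε n) s).trans hmn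
    · simpa using (hε_tendsto.const_mul c).sqrt
  obtain ⟨U, hU⟩ := cauchySeq_tendsto_of_complete hu
  refine ⟨U, tendsto_nhds_unique ?_ (hU.mul_const r), le_of_tendsto' (hU.star.mul hU) fun n => ?_⟩
  · rw [tendsto_iff_norm_sub_tendsto_zero]
    refine squeeze_zero (fun n => norm_nonneg _) (fun n => Real.le_sqrt_of_sq_le ?_)
      (by simpa using ((hε_tendsto.pow 2).const_mul c).sqrt)
    have hψ := continuous_regInv (hε n)
    have h : u n * r - b = b * cfc (fun s => regInv (ε n) s * s - 1) r := by
      rw [cfc_sub (fun s => regInv (ε n) s * s) (fun _ => 1) r (hψ.mul continuous_id).continuousOn,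
        cfc_mul _ (fun s => s) r hψ.continuousOn, cfc_id' ℝ r, cfc_const_one ℝ r,
        mul_sub, mul_one, mul_assoc]
    rw [h]
    exact norm_mul_cfc_sq_le hr hc hb (by fun_prop) (by positivity) fun s _ =>
      regInv_mul_self_sub_one_sq_mul_pow_four_le (hε n) s
  · calc star (u n) * u n ≤ c • cfc (fun s => regInv (ε n) s ^ 2 * s ^ 4) r :=
          star_mul_cfc_mul_le hr hb (continuous_regInv (hε n))
      _ ≤ c • r ^ 2 := by
          refine smul_le_smul_of_nonneg_left ?_ hc
          rw [← cfc_pow_id (R := ℝ) r 2]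
          exact cfc_mono (fun s _ => regInv_sq_mul_pow_four_le (hε n) s)
            (((continuous_regInv (hε n)).pow 2).mul (continuous_pow 4)).continuousOn

lemma star_mul_self_le_smul_pow_four_iff (hr : IsSelfAdjoint r) (hc : 0 ≤ c) :
    star b * b ≤ c • r ^ 4 ↔ ∃ U : 𝔄, b = U * r ∧ star U * U ≤ c • r ^ 2 := by
  refine ⟨exists_eq_mul_of_star_mul_self_le hr hc, fun ⟨U, hbU, hU⟩ => ?_⟩
  calc star b * b = star r * (star U * U) * r := by rw [hbU, star_mul]; noncomm_ring
    _ ≤ star r * (c • r ^ 2) * r := star_left_conjugate_le_conjugate hU r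
    _ = c • r ^ 4 := by rw [hr.star_eq, mul_smul_comm, smul_mul_assoc]; noncomm_ring

end Factorization

theorem mem_AA_iff_factorization_general {𝔄 : Type*} [CStarAlgebra 𝔄] [PartialOrder 𝔄]
    [StarOrderedRing 𝔄] (A X : 𝔄) (hA : 0 ≤ A) :
    Anorm A X ≠ ⊤ ↔
      ∃ c : ℝ, 0 < c ∧ ∃ U : 𝔄,
        CFC.sqrt A * X = U * CFC.sqrt (CFC.sqrt A) ∧
        star U * U ≤ c • CFC.sqrt A := by
  have hr : IsSelfAdjoint (CFC.sqrt (CFC.sqrt A)) := (CFC.sqrt_nonneg _).isSelfAdjoint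
  have hr2 : CFC.sqrt (CFC.sqrt A) ^ 2 = CFC.sqrt A := CFC.sq_sqrt _
  have hr4 : CFC.sqrt (CFC.sqrt A) ^ 4 = A := by
    rw [show 4 = 2 * 2 from rfl, pow_mul, hr2, CFC.sq_sqrt A]
  have hXAX : star X * A * X = star (CFC.sqrt A * X) * (CFC.sqrt A * X) := by
    conv_lhs => rw [← CFC.sqrt_mul_sqrt_self A]
    rw [star_mul, (CFC.sqrt_nonneg A).isSelfAdjoint.star_eq]
    noncomm_ring
  rw [Anorm_ne_top_iff hA]
  refine exists_congr fun c => and_congr_right fun hc => ?_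
  have := star_mul_self_le_smul_pow_four_iff (b := CFC.sqrt A * X) hr hc.le
  rwa [hr4, hr2, ← hXAX] at this

/-- `X ∈ 𝔄^A` iff there are `c > 0` and `U ∈ 𝔄` with `A^{1/2} X = U A^{1/4}` and
`U* U ≤ c A^{1/2}`. -/
theorem mem_AA_iff_factorization {𝔄 : Type*} [CStarAlgebra 𝔄] [PartialOrder 𝔄]
    [StarOrderedRing 𝔄] (A X : 𝔄) (hA : 0 ≤ A) (hA0 : A ≠ 0) :
    Anorm A X ≠ ⊤ ↔
      ∃ c : ℝ, 0 < c ∧ ∃ U : 𝔄,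
        CFC.sqrt A * X = U * CFC.sqrt (CFC.sqrt A) ∧
        star U * U ≤ c • CFC.sqrt A :=
  mem_AA_iff_factorization_general A X hA
end

section
/- Let X ∈ 𝔄^A (operators of finite A-seminorm in a C*-subalgebra of B(H)). Then X is A-invertible in 𝔄^A (there exists Y ∈ 𝔄^A with A X Y = A Y X = A) if and only if there exists Y ∈ 𝔄^A such that A X Y = A and ker(A X) ⊆ ker(A). -/
open scoped ComplexOrder ENNReal

/-! Write `A = S* S`. Testing the supremum defining `‖Y‖_A` on the vector state at `v / ‖v‖` gives
`‖S Y v‖ ≤ ‖Y‖_A ‖S v‖` whenever `S v ≠ 0`; this set of `v` is the complement of a proper closed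
subspace, hence dense, so the inequality holds for every `v`. Consequently every `Y ∈ 𝔄^A` maps
`ker A = ker S` into itself, and `A Y X = A` forces `ker (A X) ⊆ ker A`. Conversely, if `A X Y = A`
then `A X (Y X u - u) = 0` for every `u`, so `ker (A X) ⊆ ker A` yields `A Y X = A`. -/

section

open ContinuousLinearMap

variable {H : Type*} [NormedAddCommGroup H] [InnerProductSpace ℂ H] [CompleteSpace H]

section VectorState

variable (𝔄 : StarSubalgebra ℂ (H →L[ℂ] H))

noncomputable def vectorState (v : H) : 𝔄 →L[ℂ] ℂ :=
  (innerSL ℂ v).comp ((apply ℂ H v).comp 𝔄.toSubalgebra.toSubmodule.subtypeL)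

lemma vectorState_apply (v : H) (T : 𝔄) : vectorState 𝔄 v T = inner ℂ v ((T : H →L[ℂ] H) v) :=
  rfl

variable {𝔄}

lemma vectorState_apply_of_eq_star_mul_self {T : 𝔄} {R : H →L[ℂ] H}
    (hT : (T : H →L[ℂ] H) = star R * R) (v : H) :
    vectorState 𝔄 v T = ((‖R v‖ ^ 2 : ℝ) : ℂ) := by
  rw [vectorState_apply, hT, star_eq_adjoint, mul_apply_eq_comp, adjoint_inner_right,
    inner_self_eq_norm_sq_to_K]
  norm_cast

lemma isState_vectorState {v : H} (hv : ‖v‖ = 1) : IsState (vectorState 𝔄 v) := by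
  refine ⟨le_antisymm ?_ ?_, fun a ↦ ?_⟩
  · refine opNorm_le_bound _ zero_le_one fun T ↦ ?_
    calc ‖vectorState 𝔄 v T‖ ≤ ‖v‖ * ‖(T : H →L[ℂ] H) v‖ := norm_inner_le_norm _ _
      _ ≤ ‖v‖ * (‖(T : H →L[ℂ] H)‖ * ‖v‖) := by gcongr; exact le_opNorm _ _
      _ = 1 * ‖T‖ := by rw [hv]; simp
  · have h1 : vectorState 𝔄 v 1 = 1 := by
      rw [vectorState_apply_of_eq_star_mul_self (R := 1) (by simp), one_apply_eq_self, hv]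
      norm_num
    calc (1 : ℝ) = ‖vectorState 𝔄 v 1‖ := by rw [h1, norm_one]
      _ ≤ ‖vectorState 𝔄 v‖ * ‖(1 : 𝔄)‖ := le_opNorm _ _
      _ ≤ ‖vectorState 𝔄 v‖ := mul_le_of_le_one_right (norm_nonneg _) norm_id_le
  · rw [vectorState_apply_of_eq_star_mul_self (R := a) (by simp)]
    exact Complex.zero_le_real.mpr (sq_nonneg _)

end VectorState

section SeminormBound

variable {𝔄 : StarSubalgebra ℂ (H →L[ℂ] H)} {A Y : 𝔄} {S : H →L[ℂ] H}

lemma norm_apply_apply_le_of_norm_eq_one (hA : (A : H →L[ℂ] H) = star S * S)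
    (hY : Anorm A Y ≠ ⊤) {w : H} (hw : ‖w‖ = 1) (hSw : S w ≠ 0) :
    ‖S ((Y : H →L[ℂ] H) w)‖ ≤ (Anorm A Y).toReal * ‖S w‖ := by
  have hYAY : ((star Y * A * Y : 𝔄) : H →L[ℂ] H) = star (S * Y) * (S * Y) := by
    simp [hA, star_mul, mul_assoc]
  have hSw_pos : 0 < ‖S w‖ := norm_pos_iff.2 hSw
  have hfA : vectorState 𝔄 w A ≠ 0 := by
    rw [vectorState_apply_of_eq_star_mul_self hA]
    exact_mod_cast (pow_pos hSw_pos 2).ne'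
  have hle : ENNReal.ofReal (Real.sqrt ((vectorState 𝔄 w (star Y * A * Y)).re /
      (vectorState 𝔄 w A).re)) ≤ Anorm A Y :=
    le_iSup (fun f : {f : 𝔄 →L[ℂ] ℂ // IsState f ∧ f A ≠ 0} ↦
      ENNReal.ofReal (Real.sqrt ((f.1 (star Y * A * Y)).re / (f.1 A).re)))
      ⟨vectorState 𝔄 w, isState_vectorState hw, hfA⟩
  rw [ENNReal.ofReal_le_iff_le_toReal hY, vectorState_apply_of_eq_star_mul_self hYAY,
    vectorState_apply_of_eq_star_mul_self hA, Complex.ofReal_re, Complex.ofReal_re, ← div_pow,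
    Real.sqrt_sq (by positivity), div_le_iff₀ hSw_pos] at hle
  simpa only [mul_apply_eq_comp] using hle

lemma norm_apply_apply_le_of_apply_ne_zero (hA : (A : H →L[ℂ] H) = star S * S)
    (hY : Anorm A Y ≠ ⊤) {v : H} (hSv : S v ≠ 0) :
    ‖S ((Y : H →L[ℂ] H) v)‖ ≤ (Anorm A Y).toReal * ‖S v‖ := by
  have hv : v ≠ 0 := by rintro rfl; simp at hSv
  have hc : ‖((‖v‖ : ℂ)⁻¹)‖ ≠ 0 := by simpa using hv
  have h := norm_apply_apply_le_of_norm_eq_one hA hY (norm_smul_inv_norm (𝕜 := ℂ) hv)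
    (by rw [S.map_smul]; exact smul_ne_zero (norm_ne_zero_iff.1 hc) hSv)
  rw [(Y : H →L[ℂ] H).map_smul, S.map_smul, S.map_smul, norm_smul, norm_smul,
    mul_left_comm] at h
  exact le_of_mul_le_mul_left h (by positivity)

lemma norm_apply_apply_le (hA : (A : H →L[ℂ] H) = star S * S) (hY : Anorm A Y ≠ ⊤) (v : H) :
    ‖S ((Y : H →L[ℂ] H) v)‖ ≤ (Anorm A Y).toReal * ‖S v‖ := by
  by_cases hS : S = 0
  · simp [hS]
  have hdense : Dense ((LinearMap.ker (S : H →ₗ[ℂ] H) : Set H)ᶜ) := by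
    rw [← interior_eq_empty_iff_dense_compl, ← Set.not_nonempty_iff_eq_empty]
    intro h
    have hker := Submodule.eq_top_of_nonempty_interior' _ h
    exact hS (coe_injective (LinearMap.ker_eq_top.mp hker))
  have hclosed : IsClosed {v | ‖S ((Y : H →L[ℂ] H) v)‖ ≤ (Anorm A Y).toReal * ‖S v‖} :=
    isClosed_le (by fun_prop) (by fun_prop)
  exact hclosed.closure_subset_iff.2 (fun _ ↦ norm_apply_apply_le_of_apply_ne_zero hA hY)
    (hdense.closure_eq ▸ Set.mem_univ v)

lemma apply_apply_eq_zero_of_anorm_ne_top (hA : 0 ≤ (A : H →L[ℂ] H)) (hY : Anorm A Y ≠ ⊤)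
    {u : H} (hu : (A : H →L[ℂ] H) u = 0) : (A : H →L[ℂ] H) ((Y : H →L[ℂ] H) u) = 0 := by
  obtain ⟨S, hS⟩ := CStarAlgebra.nonneg_iff_eq_star_mul_self.mp hA
  have hker : ∀ x, (A : H →L[ℂ] H) x = 0 ↔ S x = 0 := fun x ↦ by
    rw [hS, star_eq_adjoint]
    exact SetLike.ext_iff.mp (ker_adjoint_comp_self S) x
  rw [hker] at hu ⊢
  simpa [hu] using norm_apply_apply_le hS hY u

end SeminormBound

section Algebra

variable {R M : Type*} [Semiring R] [TopologicalSpace M] [AddCommGroup M] [Module R M]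
  {A X Y : M →L[R] M}

lemma ker_mul_le_ker_of_mul_mul_eq (hY : ∀ u, A u = 0 → A (Y u) = 0) (h : A * Y * X = A) :
    LinearMap.ker ((A * X : M →L[R] M) : M →ₗ[R] M) ≤ LinearMap.ker (A : M →ₗ[R] M) := by
  intro u hu
  simp only [LinearMap.mem_ker, coe_coe, mul_apply_eq_comp] at hu ⊢
  rw [← h, mul_apply_eq_comp, mul_apply_eq_comp, hY _ hu]

lemma mul_mul_eq_of_ker_le (h : A * X * Y = A)
    (hker : LinearMap.ker ((A * X : M →L[R] M) : M →ₗ[R] M) ≤ LinearMap.ker (A : M →ₗ[R] M)) :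
    A * Y * X = A := by
  ext u
  have hmem : Y (X u) - u ∈ LinearMap.ker ((A * X : M →L[R] M) : M →ₗ[R] M) := by
    rw [LinearMap.mem_ker, coe_coe, map_sub, ← mul_apply_eq_comp (A * X), h, mul_apply_eq_comp,
      sub_self]
  simpa [sub_eq_zero] using hker hmem

end Algebra

end

theorem aInvertible_iff_right_inv_and_ker_general {H : Type*} [NormedAddCommGroup H]
    [InnerProductSpace ℂ H] [CompleteSpace H]
    (𝔄 : StarSubalgebra ℂ (H →L[ℂ] H))
    (A : 𝔄) (hA : 0 ≤ (A : H →L[ℂ] H))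
    (X : 𝔄) :
    (∃ Y : 𝔄, Anorm A Y ≠ ⊤ ∧ A * X * Y = A ∧ A * Y * X = A) ↔
      (∃ Y : 𝔄, Anorm A Y ≠ ⊤ ∧ A * X * Y = A ∧
        LinearMap.ker (((A : H →L[ℂ] H) * (X : H →L[ℂ] H) : H →L[ℂ] H) : H →ₗ[ℂ] H) ≤
          LinearMap.ker ((A : H →L[ℂ] H) : H →ₗ[ℂ] H)) := by
  simp only [Subtype.ext_iff, MulMemClass.coe_mul]
  constructor
  · rintro ⟨Y, hY, hXY, hYX⟩
    exact ⟨Y, hY, hXY,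
      ker_mul_le_ker_of_mul_mul_eq (fun _ ↦ apply_apply_eq_zero_of_anorm_ne_top hA hY) hYX⟩
  · rintro ⟨Y, hY, hXY, hker⟩
    exact ⟨Y, hY, hXY, mul_mul_eq_of_ker_le hXY hker⟩

/-- `X ∈ 𝔄^A` is `A`-invertible in `𝔄^A` iff there is `Y ∈ 𝔄^A` with `A X Y = A` and
`ker (A X) ⊆ ker A`. -/
theorem aInvertible_iff_right_inv_and_ker {H : Type*} [NormedAddCommGroup H]
    [InnerProductSpace ℂ H] [CompleteSpace H]
    (𝔄 : StarSubalgebra ℂ (H →L[ℂ] H)) (hclosed : IsClosed (𝔄 : Set (H →L[ℂ] H)))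
    (A : 𝔄) (hA : 0 ≤ (A : H →L[ℂ] H)) (hA0 : A ≠ 0)
    (X : 𝔄) (hX : Anorm A X ≠ ⊤) :
    (∃ Y : 𝔄, Anorm A Y ≠ ⊤ ∧ A * X * Y = A ∧ A * Y * X = A) ↔
      (∃ Y : 𝔄, Anorm A Y ≠ ⊤ ∧ A * X * Y = A ∧
        LinearMap.ker (((A : H →L[ℂ] H) * (X : H →L[ℂ] H) : H →L[ℂ] H) : H →ₗ[ℂ] H) ≤
          LinearMap.ker ((A : H →L[ℂ] H) : H →ₗ[ℂ] H)) :=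
  aInvertible_iff_right_inv_and_ker_general 𝔄 A hA X
end

section
/- Let X, Y ∈ 𝔄^A be such that X is A-left invertible and A-right invertible in 𝔄^A. Then X is A-invertible in 𝔄^A. -/
open scoped ComplexOrder ENNReal

open scoped InnerProductSpace

set_option maxHeartbeats 1000000
set_option synthInstance.maxHeartbeats 500000

section Aux

variable {H : Type*} [NormedAddCommGroup H] [InnerProductSpace ℂ H] [CompleteSpace H]

set_option maxHeartbeats 1000000 in
set_option synthInstance.maxHeartbeats 500000 in
/-- If `B ≥ 0` and `re ⟪u, B u⟫ = 0` then `B u = 0`. -/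
lemma posop_apply_eq_zero {B : H →L[ℂ] H} (hB : 0 ≤ B) {u : H}
    (h : (⟪u, B u⟫_ℂ).re = 0) : B u = 0 := by
  set s := CFC.sqrt B with hs
  have hsnn : 0 ≤ s := CFC.sqrt_nonneg (a := B)
  have hsa : IsSelfAdjoint s := IsSelfAdjoint.of_nonneg hsnn
  have hss : s * s = B := CFC.sqrt_mul_sqrt_self B hB
  have hBu : B u = s (s u) := by rw [← hss]; rfl
  have hadj : ContinuousLinearMap.adjoint s = s := by
    rw [← ContinuousLinearMap.star_eq_adjoint]; exact hsa.star_eq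
  have hinner : ⟪u, B u⟫_ℂ = ⟪s u, s u⟫_ℂ := by
    rw [hBu, ← ContinuousLinearMap.adjoint_inner_left s (s u) u, hadj]
  have h2 : ‖s u‖ ^ 2 = 0 := by
    rw [← inner_self_eq_norm_sq (𝕜 := ℂ) (s u), ← hinner]
    simpa using h
  have hsu : s u = 0 := by
    have := pow_eq_zero_iff (n := 2) (by norm_num) |>.mp h2
    exact norm_eq_zero.mp this
  rw [hBu, hsu, map_zero]

variable (𝔄 : StarSubalgebra ℂ (H →L[ℂ] H))

/-- The inclusion `𝔄 → B(H)` as a continuous linear map. -/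
noncomputable def incl : 𝔄 →L[ℂ] (H →L[ℂ] H) :=
  { toFun := Subtype.val, map_add' := fun _ _ => rfl, map_smul' := fun _ _ => rfl,
    cont := continuous_subtype_val }

/-- The vector state associated to `v`. -/
noncomputable def vecState (v : H) : 𝔄 →L[ℂ] ℂ :=
  (innerSL ℂ v).comp ((ContinuousLinearMap.apply ℂ H v).comp (incl 𝔄))

lemma vecState_apply (v : H) (T : 𝔄) :
    vecState 𝔄 v T = ⟪v, (T : H →L[ℂ] H) v⟫_ℂ := rfl

lemma coe_norm (T : 𝔄) : ‖T‖ = ‖(T : H →L[ℂ] H)‖ := rfl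

lemma mixState_isState [Nontrivial H] {v v₀ : H} (hv : ‖v‖ = 1) (hv₀ : ‖v₀‖ = 1)
    {t : ℝ} (ht0 : 0 ≤ t) (ht1 : t ≤ 1) :
    IsState (((1 - t : ℝ) : ℂ) • vecState 𝔄 v + ((t : ℝ) : ℂ) • vecState 𝔄 v₀) := by
  set g := ((1 - t : ℝ) : ℂ) • vecState 𝔄 v + ((t : ℝ) : ℂ) • vecState 𝔄 v₀ with hg
  have gapp : ∀ T : 𝔄, g T = ((1 - t : ℝ) : ℂ) * ⟪v, (T : H →L[ℂ] H) v⟫_ℂ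
      + ((t : ℝ) : ℂ) * ⟪v₀, (T : H →L[ℂ] H) v₀⟫_ℂ := fun T => rfl
  constructor
  · -- norm one
    have hle : ‖g‖ ≤ 1 := by
      refine ContinuousLinearMap.opNorm_le_bound g zero_le_one (fun T => ?_)
      rw [gapp]
      calc ‖((1 - t : ℝ) : ℂ) * ⟪v, (T : H →L[ℂ] H) v⟫_ℂ
            + ((t : ℝ) : ℂ) * ⟪v₀, (T : H →L[ℂ] H) v₀⟫_ℂ‖
          ≤ ‖((1 - t : ℝ) : ℂ) * ⟪v, (T : H →L[ℂ] H) v⟫_ℂ‖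
            + ‖((t : ℝ) : ℂ) * ⟪v₀, (T : H →L[ℂ] H) v₀⟫_ℂ‖ := norm_add_le _ _
        _ ≤ (1 - t) * ‖T‖ + t * ‖T‖ := by
            gcongr
            · rw [norm_mul, Complex.norm_real, Real.norm_eq_abs,
                abs_of_nonneg (by linarith)]
              have h1 : ‖⟪v, (T : H →L[ℂ] H) v⟫_ℂ‖ ≤ ‖T‖ := by
                calc ‖⟪v, (T : H →L[ℂ] H) v⟫_ℂ‖ ≤ ‖v‖ * ‖(T : H →L[ℂ] H) v‖ :=
                      norm_inner_le_norm _ _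
                  _ ≤ ‖v‖ * (‖(T : H →L[ℂ] H)‖ * ‖v‖) := by
                      gcongr; exact ContinuousLinearMap.le_opNorm _ _
                  _ = ‖T‖ := by rw [hv, coe_norm]; ring
              gcongr
            · rw [norm_mul, Complex.norm_real, Real.norm_eq_abs, abs_of_nonneg ht0]
              have h1 : ‖⟪v₀, (T : H →L[ℂ] H) v₀⟫_ℂ‖ ≤ ‖T‖ := by
                calc ‖⟪v₀, (T : H →L[ℂ] H) v₀⟫_ℂ‖ ≤ ‖v₀‖ * ‖(T : H →L[ℂ] H) v₀‖ :=
                      norm_inner_le_norm _ _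
                  _ ≤ ‖v₀‖ * (‖(T : H →L[ℂ] H)‖ * ‖v₀‖) := by
                      gcongr; exact ContinuousLinearMap.le_opNorm _ _
                  _ = ‖T‖ := by rw [hv₀, coe_norm]; ring
              gcongr
        _ = 1 * ‖T‖ := by ring
    have hone : g 1 = 1 := by
      rw [gapp]
      have hc : ((1 : 𝔄) : H →L[ℂ] H) = 1 := rfl
      rw [hc]
      simp only [ContinuousLinearMap.one_apply]
      rw [inner_self_eq_norm_sq_to_K (𝕜 := ℂ) v, inner_self_eq_norm_sq_to_K (𝕜 := ℂ) v₀,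
        hv, hv₀]
      push_cast
      ring
    have hge : (1 : ℝ) ≤ ‖g‖ := by
      have h1 : ‖(1 : 𝔄)‖ = 1 := by
        rw [coe_norm]; exact norm_one
      have := ContinuousLinearMap.le_opNorm g 1
      rw [hone, h1, mul_one] at this
      simpa using this
    linarith
  · -- positivity
    intro a
    rw [gapp]
    have hcoe : ((star a * a : 𝔄) : H →L[ℂ] H) = star (a : H →L[ℂ] H) * (a : H →L[ℂ] H) := by
      simp [MulMemClass.coe_mul, StarMemClass.coe_star]
    have key : ∀ w : H, ⟪w, ((star a * a : 𝔄) : H →L[ℂ] H) w⟫_ℂ = (‖(a : H →L[ℂ] H) w‖ : ℂ) ^ 2 := by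
      intro w
      rw [hcoe]
      have : (star (a : H →L[ℂ] H) * (a : H →L[ℂ] H)) w
          = (ContinuousLinearMap.adjoint (a : H →L[ℂ] H)) ((a : H →L[ℂ] H) w) := by
        rw [ContinuousLinearMap.star_eq_adjoint]; rfl
      rw [this, ContinuousLinearMap.adjoint_inner_right, inner_self_eq_norm_sq_to_K]
      norm_cast
    rw [key v, key v₀]
    have h1 : (0 : ℂ) ≤ ((1 - t : ℝ) : ℂ) * (‖(a : H →L[ℂ] H) v‖ : ℂ) ^ 2 := by
      rw [← Complex.ofReal_pow, ← Complex.ofReal_mul]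
      rw [Complex.zero_le_real]
      exact mul_nonneg (by linarith) (by positivity)
    have h2 : (0 : ℂ) ≤ ((t : ℝ) : ℂ) * (‖(a : H →L[ℂ] H) v₀‖ : ℂ) ^ 2 := by
      rw [← Complex.ofReal_pow, ← Complex.ofReal_mul]
      rw [Complex.zero_le_real]
      positivity
    exact add_nonneg h1 h2

/-- The key lemma: if `A ≥ 0`, `Z` has finite `A`-norm, and `A u = 0`, then `A (Z u) = 0`. -/
lemma key_lemma {𝔄 : StarSubalgebra ℂ (H →L[ℂ] H)} {A Z : 𝔄}
    (hA : 0 ≤ (A : H →L[ℂ] H)) (hZfin : Anorm A Z ≠ ⊤)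
    {v₀ : H} (hv₀ : ‖v₀‖ = 1) (hq₀ : 0 < (⟪v₀, (A : H →L[ℂ] H) v₀⟫_ℂ).re)
    {u : H} (hu : (A : H →L[ℂ] H) u = 0) :
    (A : H →L[ℂ] H) ((Z : H →L[ℂ] H) u) = 0 := by
  have : Nontrivial H := by
    refine nontrivial_of_ne v₀ 0 (fun h => ?_)
    rw [h] at hv₀; simp at hv₀
  rcases eq_or_ne u 0 with rfl | hu0
  · simp
  -- normalize u
  set v : H := ((‖u‖ : ℂ))⁻¹ • u with hvdef
  have hunorm : ‖u‖ ≠ 0 := norm_ne_zero_iff.mpr hu0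
  have hvnorm : ‖v‖ = 1 := by
    rw [hvdef, norm_smul, norm_inv, Complex.norm_real, norm_norm, inv_mul_cancel₀ hunorm]
  have hAv : (A : H →L[ℂ] H) v = 0 := by
    rw [hvdef, map_smul, hu, smul_zero]
  -- the positive operator star Z * A * Z
  have hcoeB : ((star Z * A * Z : 𝔄) : H →L[ℂ] H)
      = star (Z : H →L[ℂ] H) * (A : H →L[ℂ] H) * (Z : H →L[ℂ] H) := by
    simp [MulMemClass.coe_mul, StarMemClass.coe_star]
  have hBpos : 0 ≤ ((star Z * A * Z : 𝔄) : H →L[ℂ] H) := by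
    rw [hcoeB]; exact star_left_conjugate_nonneg hA _
  have hBinner : ∀ w : H, ⟪w, ((star Z * A * Z : 𝔄) : H →L[ℂ] H) w⟫_ℂ
      = ⟪(Z : H →L[ℂ] H) w, (A : H →L[ℂ] H) ((Z : H →L[ℂ] H) w)⟫_ℂ := by
    intro w
    rw [hcoeB]
    have : (star (Z : H →L[ℂ] H) * (A : H →L[ℂ] H) * (Z : H →L[ℂ] H)) w
        = (ContinuousLinearMap.adjoint (Z : H →L[ℂ] H))
            ((A : H →L[ℂ] H) ((Z : H →L[ℂ] H) w)) := by
      rw [ContinuousLinearMap.star_eq_adjoint]; rfl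
    rw [this, ContinuousLinearMap.adjoint_inner_right]
  have hApos' : (A : H →L[ℂ] H).IsPositive :=
    (ContinuousLinearMap.nonneg_iff_isPositive _).mp hA
  -- nonnegativity of the quadratic forms
  have hpv : 0 ≤ (⟪v, ((star Z * A * Z : 𝔄) : H →L[ℂ] H) v⟫_ℂ).re := by
    rw [hBinner]
    simpa using (Complex.le_def.mp (hApos'.inner_nonneg_right ((Z : H →L[ℂ] H) v))).1
  have hp0 : 0 ≤ (⟪v₀, ((star Z * A * Z : 𝔄) : H →L[ℂ] H) v₀⟫_ℂ).re := by
    rw [hBinner]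
    simpa using (Complex.le_def.mp (hApos'.inner_nonneg_right ((Z : H →L[ℂ] H) v₀))).1
  set C : ℝ := (Anorm A Z).toReal with hC
  set pv : ℝ := (⟪v, ((star Z * A * Z : 𝔄) : H →L[ℂ] H) v⟫_ℂ).re with hpvdef
  set p0 : ℝ := (⟪v₀, ((star Z * A * Z : 𝔄) : H →L[ℂ] H) v₀⟫_ℂ).re with hp0def
  set q0 : ℝ := (⟪v₀, (A : H →L[ℂ] H) v₀⟫_ℂ).re with hq0def
  -- the main estimate for each t ∈ (0, 1/2]
  have main : ∀ t : ℝ, 0 < t → t ≤ 1 / 2 → pv ≤ t * (2 * C ^ 2 * q0) := by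
    intro t ht0 ht12
    set g := ((1 - t : ℝ) : ℂ) • vecState 𝔄 v + ((t : ℝ) : ℂ) • vecState 𝔄 v₀ with hgdef
    have gapp : ∀ T : 𝔄, g T = ((1 - t : ℝ) : ℂ) * ⟪v, (T : H →L[ℂ] H) v⟫_ℂ
        + ((t : ℝ) : ℂ) * ⟪v₀, (T : H →L[ℂ] H) v₀⟫_ℂ := fun T => rfl
    have hgstate : IsState g :=
      mixState_isState 𝔄 hvnorm hv₀ ht0.le (by linarith)
    have hgA : g A = ((t : ℝ) : ℂ) * ⟪v₀, (A : H →L[ℂ] H) v₀⟫_ℂ := by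
      rw [gapp, hAv, inner_zero_right, mul_zero, zero_add]
    have hgAre : (g A).re = t * q0 := by
      rw [hgA, Complex.re_ofReal_mul]
    have hgAre_pos : 0 < (g A).re := by
      rw [hgAre]; positivity
    have hgA0 : g A ≠ 0 := fun h => by
      rw [h] at hgAre_pos; simp at hgAre_pos
    -- the Anorm bound
    have hsup : ENNReal.ofReal (Real.sqrt ((g (star Z * A * Z)).re / (g A).re))
        ≤ Anorm A Z :=
      le_iSup (fun f : {f : 𝔄 →L[ℂ] ℂ // IsState f ∧ f A ≠ 0} =>
        ENNReal.ofReal (Real.sqrt ((f.1 (star Z * A * Z)).re / (f.1 A).re)))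
        ⟨g, hgstate, hgA0⟩
    rw [ENNReal.ofReal_le_iff_le_toReal hZfin] at hsup
    have hBre : (g (star Z * A * Z)).re = (1 - t) * pv + t * p0 := by
      rw [gapp]
      simp [Complex.add_re, Complex.re_ofReal_mul, hpvdef, hp0def]
    have hratio_nonneg : 0 ≤ (g (star Z * A * Z)).re / (g A).re := by
      apply div_nonneg _ hgAre_pos.le
      rw [hBre]
      have h1t : 0 ≤ 1 - t := by linarith
      positivity
    have hratio : (g (star Z * A * Z)).re / (g A).re ≤ C ^ 2 := by
      have := Real.sq_sqrt hratio_nonneg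
      calc (g (star Z * A * Z)).re / (g A).re
          = Real.sqrt ((g (star Z * A * Z)).re / (g A).re) ^ 2 := this.symm
        _ ≤ C ^ 2 := by
            apply pow_le_pow_left₀ (Real.sqrt_nonneg _) hsup
    have hmain : (g (star Z * A * Z)).re ≤ C ^ 2 * (g A).re :=
      (div_le_iff₀ hgAre_pos).mp hratio
    rw [hBre, hgAre] at hmain
    -- (1-t) pv + t p0 ≤ C² t q0 ⇒ (1/2) pv ≤ t C² q0
    nlinarith [hpv, hp0, ht0.le, ht12]
  -- take t → 0
  have hpv_le : pv ≤ 0 := by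
    have htend : Filter.Tendsto (fun n : ℕ => (((n : ℝ) + 2)⁻¹) * (2 * C ^ 2 * q0))
        Filter.atTop (nhds 0) := by
      have h1 : Filter.Tendsto (fun n : ℕ => ((n : ℝ) + 2)⁻¹) Filter.atTop (nhds 0) := by
        apply Filter.Tendsto.comp tendsto_inv_atTop_zero
        exact Filter.tendsto_atTop_add_const_right _ 2 tendsto_natCast_atTop_atTop
      simpa using h1.mul_const (2 * C ^ 2 * q0)
    refine ge_of_tendsto' htend (fun n => ?_)
    apply main
    · positivity
    · have hn : (0:ℝ) ≤ (n:ℝ) := Nat.cast_nonneg n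
      have h2 : ((n:ℝ) + 2)⁻¹ ≤ (2:ℝ)⁻¹ := by
        apply inv_anti₀ (by norm_num) (by linarith)
      exact h2.trans_eq (by norm_num)
  have hpv0 : pv = 0 := le_antisymm hpv_le hpv
  have hAZv : (A : H →L[ℂ] H) ((Z : H →L[ℂ] H) v) = 0 := by
    have h0 : (⟪(Z : H →L[ℂ] H) v, (A : H →L[ℂ] H) ((Z : H →L[ℂ] H) v)⟫_ℂ).re = 0 := by
      rw [← hBinner]; exact hpv0
    exact posop_apply_eq_zero hA h0
  -- scale back
  have : (Z : H →L[ℂ] H) u = (‖u‖ : ℂ) • (Z : H →L[ℂ] H) v := by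
    rw [hvdef, map_smul, smul_smul]
    norm_cast
    rw [mul_inv_cancel₀ hunorm, one_smul]
  rw [this, map_smul, hAZv, smul_zero]

end Aux

/-- If `X ∈ 𝔄^A` is both `A`-left invertible and `A`-right invertible in `𝔄^A`, then
`X` is `A`-invertible in `𝔄^A`. -/
theorem aInvertible_of_left_and_right {H : Type*} [NormedAddCommGroup H]
    [InnerProductSpace ℂ H] [CompleteSpace H]
    (𝔄 : StarSubalgebra ℂ (H →L[ℂ] H)) (hclosed : IsClosed (𝔄 : Set (H →L[ℂ] H)))
    (A : 𝔄) (hA : 0 ≤ (A : H →L[ℂ] H)) (hA0 : A ≠ 0)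
    (X : 𝔄) (hX : Anorm A X ≠ ⊤)
    (hleft : ∃ Z : 𝔄, Anorm A Z ≠ ⊤ ∧ A * Z * X = A)
    (hright : ∃ Y : 𝔄, Anorm A Y ≠ ⊤ ∧ A * X * Y = A) :
    ∃ Y : 𝔄, Anorm A Y ≠ ⊤ ∧ A * X * Y = A ∧ A * Y * X = A := by
  obtain ⟨Z, hZfin, hZX⟩ := hleft
  obtain ⟨Y, hYfin, hXY⟩ := hright
  -- find a unit vector not killed by A
  have hA0' : (A : H →L[ℂ] H) ≠ 0 := fun h => hA0 (Subtype.ext h)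
  obtain ⟨w₀, hw₀⟩ : ∃ w : H, (A : H →L[ℂ] H) w ≠ 0 := by
    by_contra h
    push_neg at h
    exact hA0' (ContinuousLinearMap.ext fun w => by rw [h w]; rfl)
  have hw₀0 : w₀ ≠ 0 := fun h => hw₀ (by rw [h, map_zero])
  have hw₀norm : ‖w₀‖ ≠ 0 := norm_ne_zero_iff.mpr hw₀0
  set v₀ : H := ((‖w₀‖ : ℂ))⁻¹ • w₀ with hv₀def
  have hv₀norm : ‖v₀‖ = 1 := by
    rw [hv₀def, norm_smul, norm_inv, Complex.norm_real, norm_norm, inv_mul_cancel₀ hw₀norm]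
  have hAv₀ : (A : H →L[ℂ] H) v₀ ≠ 0 := by
    rw [hv₀def, map_smul]
    intro hzero
    apply hw₀
    have h3 : ((‖w₀‖ : ℂ)) • (((‖w₀‖ : ℂ))⁻¹ • (A : H →L[ℂ] H) w₀) = 0 := by
      rw [hzero, smul_zero]
    rwa [smul_inv_smul₀ (Complex.ofReal_ne_zero.mpr hw₀norm)] at h3
  have hApos' : (A : H →L[ℂ] H).IsPositive :=
    (ContinuousLinearMap.nonneg_iff_isPositive _).mp hA
  have hq₀ : 0 < (⟪v₀, (A : H →L[ℂ] H) v₀⟫_ℂ).re := by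
    have hnn : 0 ≤ (⟪v₀, (A : H →L[ℂ] H) v₀⟫_ℂ).re := by
      simpa using (Complex.le_def.mp (hApos'.inner_nonneg_right v₀)).1
    rcases hnn.lt_or_eq with h | h
    · exact h
    · exact absurd (posop_apply_eq_zero hA h.symm) hAv₀
  -- W = X * Y - 1 satisfies A * W = 0
  set W : 𝔄 := X * Y - 1 with hWdef
  have hAW : A * W = 0 := by
    rw [hWdef, mul_sub, mul_one, ← mul_assoc, hXY, sub_self]
  -- A * Z * W = 0
  have hAZW : A * Z * W = 0 := by
    apply Subtype.ext
    apply ContinuousLinearMap.ext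
    intro h
    have hu : (A : H →L[ℂ] H) ((W : H →L[ℂ] H) h) = 0 := by
      have : ((A * W : 𝔄) : H →L[ℂ] H) = (A : H →L[ℂ] H) * (W : H →L[ℂ] H) := by
        simp [MulMemClass.coe_mul]
      have h2 := congrArg (fun T : H →L[ℂ] H => T h) (this ▸ congrArg Subtype.val hAW)
      simpa using h2
    have := key_lemma (𝔄 := 𝔄) hA hZfin hv₀norm hq₀ hu
    have hcoe : ((A * Z * W : 𝔄) : H →L[ℂ] H)
        = (A : H →L[ℂ] H) * ((Z : H →L[ℂ] H) * (W : H →L[ℂ] H)) := by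
      simp [MulMemClass.coe_mul, mul_assoc]
    calc ((A * Z * W : 𝔄) : H →L[ℂ] H) h
        = (A : H →L[ℂ] H) ((Z : H →L[ℂ] H) ((W : H →L[ℂ] H) h)) := by rw [hcoe]; rfl
      _ = 0 := this
      _ = ((0 : 𝔄) : H →L[ℂ] H) h := rfl
  -- conclude A * Y = A * Z
  have hAYZ : A * Y = A * Z := by
    have h1 : A * Z * (X * Y) = A * Y := by
      rw [← mul_assoc, hZX]
    have h2 : A * Z * (X * Y) = A * Z := by
      have : X * Y = W + 1 := by rw [hWdef]; abel
      rw [this, mul_add, mul_one, hAZW, zero_add]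
    rw [← h1, h2]
  refine ⟨Y, hYfin, hXY, ?_⟩
  rw [hAYZ, hZX]
end

section
/- Let X, Y, R, W ∈ 𝔄^A with A^{1/2} X = W* A^{1/2} and A^{1/2} Y = R* A^{1/2}. Then X is A-invertible with A-inverse Y if and only if W is A-invertible with A-inverse R. -/
set_option synthInstance.maxHeartbeats 400000
set_option maxHeartbeats 1000000
open scoped ComplexOrder ENNReal

/-- If `a T = 0` with `a ≥ 0`, then `√a T = 0`. -/
lemma sqrt_mul_eq_zero_of_mul_eq_zero {H : Type*} [NormedAddCommGroup H]
    [InnerProductSpace ℂ H] [CompleteSpace H]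
    (a t : H →L[ℂ] H) (ha : 0 ≤ a) (h : a * t = 0) : CFC.sqrt a * t = 0 := by
  set s := CFC.sqrt a with hs
  have hss : s * s = a := CFC.sqrt_mul_sqrt_self a ha
  have hsa : IsSelfAdjoint s := IsSelfAdjoint.of_nonneg (CFC.sqrt_nonneg a)
  ext x
  show (s * t) x = (0 : H →L[ℂ] H) x
  rw [ContinuousLinearMap.zero_apply]
  rw [← inner_self_eq_zero (𝕜 := ℂ)]
  have hst : ((s * t) x : H) = s (t x) := rfl
  rw [hst]
  have h2 : s (s (t x)) = 0 := by
    have e : s (s (t x)) = (a * t) x := by rw [← hss]; rfl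
    rw [e, h]; rfl
  have := (ContinuousLinearMap.adjoint_inner_right s (t x) (s (t x))).symm
  rw [hsa.adjoint_eq, h2, inner_zero_right] at this
  exact this

/-- If `a T = a` with `a ≥ 0`, then `√a T = √a`. -/
lemma sqrt_mul_eq_sqrt_of_mul_eq_self {H : Type*} [NormedAddCommGroup H]
    [InnerProductSpace ℂ H] [CompleteSpace H]
    (a t : H →L[ℂ] H) (ha : 0 ≤ a) (h : a * t = a) : CFC.sqrt a * t = CFC.sqrt a := by
  have h0 : a * (t - 1) = 0 := by rw [mul_sub, mul_one, h, sub_self]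
  have := sqrt_mul_eq_zero_of_mul_eq_zero a (t - 1) ha h0
  rwa [mul_sub, mul_one, sub_eq_zero] at this

/-- If `A^{1/2} X = W* A^{1/2}` and `A^{1/2} Y = R* A^{1/2}`, then `X` is `A`-invertible with
`A`-inverse `Y` iff `W` is `A`-invertible with `A`-inverse `R`. -/
theorem aInvertible_adjoint_iff {H : Type*} [NormedAddCommGroup H]
    [InnerProductSpace ℂ H] [CompleteSpace H]
    (𝔄 : StarSubalgebra ℂ (H →L[ℂ] H)) (hclosed : IsClosed (𝔄 : Set (H →L[ℂ] H)))
    (A : 𝔄) (hA : 0 ≤ (A : H →L[ℂ] H)) (hA0 : A ≠ 0)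
    (X Y R W : 𝔄) (hX : Anorm A X ≠ ⊤) (hY : Anorm A Y ≠ ⊤)
    (hR : Anorm A R ≠ ⊤) (hW : Anorm A W ≠ ⊤)
    (hXW : CFC.sqrt (A : H →L[ℂ] H) * (X : H →L[ℂ] H) =
      star (W : H →L[ℂ] H) * CFC.sqrt (A : H →L[ℂ] H))
    (hYR : CFC.sqrt (A : H →L[ℂ] H) * (Y : H →L[ℂ] H) =
      star (R : H →L[ℂ] H) * CFC.sqrt (A : H →L[ℂ] H)) :
    (A * X * Y = A ∧ A * Y * X = A) ↔ (A * W * R = A ∧ A * R * W = A) := by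
  set a : H →L[ℂ] H := (A : H →L[ℂ] H) with ha'
  set x : H →L[ℂ] H := (X : H →L[ℂ] H)
  set y : H →L[ℂ] H := (Y : H →L[ℂ] H)
  set r : H →L[ℂ] H := (R : H →L[ℂ] H)
  set w : H →L[ℂ] H := (W : H →L[ℂ] H)
  set s : H →L[ℂ] H := CFC.sqrt a with hs
  have hss : s * s = a := CFC.sqrt_mul_sqrt_self a hA
  have hsa : IsSelfAdjoint s := IsSelfAdjoint.of_nonneg (CFC.sqrt_nonneg a)
  -- star versions of the intertwining relations
  have hsw : s * w = star x * s := by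
    have h := congrArg star hXW
    rw [star_mul, star_mul, star_star, hsa.star_eq] at h
    exact h.symm
  have hsr : s * r = star y * s := by
    have h := congrArg star hYR
    rw [star_mul, star_mul, star_star, hsa.star_eq] at h
    exact h.symm
  -- the key implication
  have key : ∀ u v p q : H →L[ℂ] H, s * u = star p * s → s * v = star q * s →
      a * (q * p) = a → a * u * v = a := by
    intro u v p q h1 h2 h3
    have h4 : s * (q * p) = s := sqrt_mul_eq_sqrt_of_mul_eq_self a (q * p) hA h3
    have h5 : star (q * p) * s = s := by
      have h6 := congrArg star h4
      rw [star_mul, hsa.star_eq] at h6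
      exact h6
    calc a * u * v = s * (s * u) * v := by rw [← hss, mul_assoc s s u]
      _ = s * (star p * s * v) := by rw [h1, mul_assoc]
      _ = s * (star p * (star q * s)) := by rw [mul_assoc (star p) s v, h2]
      _ = s * (star (q * p) * s) := by rw [star_mul, mul_assoc]
      _ = s * s := by rw [h5]
      _ = a := hss
  have coe_inj : ∀ B C : 𝔄, B = C ↔ (B : H →L[ℂ] H) = (C : H →L[ℂ] H) :=
    fun B C => ⟨congrArg _, fun h => Subtype.ext h⟩
  simp only [coe_inj, MulMemClass.coe_mul]
  constructor
  · rintro ⟨h1, h2⟩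
    refine ⟨key w r x y hsw hsr ?_, key r w y x hsr hsw ?_⟩
    · rw [← mul_assoc]; exact h2
    · rw [← mul_assoc]; exact h1
  · rintro ⟨h1, h2⟩
    refine ⟨key x y w r hXW hYR ?_, key y x r w hYR hXW ?_⟩
    · rw [← mul_assoc]; exact h2
    · rw [← mul_assoc]; exact h1
end

section
/- For an element X of a unital C*-algebra 𝔄: λ belongs to the right spectrum of X (λ−X not right invertible) if and only if there exists a state f with λ = f(X) and f(X X*) = |f(X)|²; and λ belongs to the left spectrum if and only if there exists a state f with λ = f(X) and f(X* X) = |f(X)|². -/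
open scoped ComplexOrder ENNReal

namespace RLSpec

variable {𝔄 : Type*} [CStarAlgebra 𝔄] {f : 𝔄 →L[ℂ] ℂ}

/-- A positive functional is real on selfadjoint elements. -/
lemma im_eq_zero (hpos : ∀ a : 𝔄, 0 ≤ f (star a * a)) {h : 𝔄} (hh : IsSelfAdjoint h) :
    (f h).im = 0 := by
  have hA := hpos (1 + h)
  have hB := hpos (1 - h)
  rw [Complex.nonneg_iff] at hA hB
  have e1 : star (1 + h) * (1 + h) = 1 + h + h + h * h := by
    rw [star_add, star_one, hh.star_eq]; noncomm_ring
  have e2 : star (1 - h) * (1 - h) = 1 - h - h + h * h := by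
    rw [star_sub, star_one, hh.star_eq]; noncomm_ring
  rw [e1, map_add, map_add, map_add] at hA
  rw [e2, map_add, map_sub, map_sub] at hB
  have iA := hA.2
  have iB := hB.2
  simp only [Complex.add_im, Complex.sub_im] at iA iB
  linarith

lemma map_star_eq (hpos : ∀ a : 𝔄, 0 ≤ f (star a * a)) (a : 𝔄) :
    f (star a) = starRingEnd ℂ (f a) := by
  set h : 𝔄 := (2 : ℂ)⁻¹ • (a + star a) with hh
  set k : 𝔄 := (-(Complex.I) / 2) • (a - star a) with hk
  have hsh : IsSelfAdjoint h := by
    rw [IsSelfAdjoint, hh, star_smul, star_add, star_star]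
    rw [show star ((2:ℂ)⁻¹) = (2:ℂ)⁻¹ by simp [Complex.star_def]]
    rw [add_comm]
  have hsk : IsSelfAdjoint k := by
    rw [IsSelfAdjoint, hk, star_smul, star_sub, star_star]
    rw [show star (-(Complex.I)/2) = Complex.I/2 by
      simp [Complex.star_def, map_div₀]]
    match_scalars <;> ring
  have hdecomp : a = h + Complex.I • k := by
    rw [hh, hk]
    match_scalars
    · linear_combination (1/2:ℂ) * Complex.I_sq
    · linear_combination (-1/2:ℂ) * Complex.I_sq
  have hstar : star a = h - Complex.I • k := by
    rw [hdecomp, star_add, hsh.star_eq, star_smul, hsk.star_eq]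
    rw [show star (Complex.I) = -Complex.I by simp [Complex.star_def]]
    rw [neg_smul, sub_eq_add_neg]
  have h1 := im_eq_zero hpos hsh
  have h2 := im_eq_zero hpos hsk
  have ea : f a = f h + Complex.I * f k := by
    conv_lhs => rw [hdecomp]
    rw [map_add, map_smul, map_smul]; simp only [smul_eq_mul]
  have es : f (star a) = f h - Complex.I * f k := by
    conv_lhs => rw [hstar]
    rw [map_sub, map_smul, map_smul]; simp only [smul_eq_mul]
  rw [ea, es, Complex.ext_iff]
  constructor
  · simp [Complex.mul_re, h1, h2]
  · simp [Complex.mul_im, h1, h2]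

/-- Cauchy–Schwarz for positive functionals. -/
lemma cauchy_schwarz (hpos : ∀ a : 𝔄, 0 ≤ f (star a * a)) (a b : 𝔄) :
    ‖f (star b * a)‖ ^ 2 ≤ (f (star a * a)).re * (f (star b * b)).re := by
  have hra := (Complex.nonneg_iff.mp (hpos a)).1
  have hrb := (Complex.nonneg_iff.mp (hpos b)).1
  set w : ℂ := f (star b * a) with hwdef
  by_cases hw : w = 0
  · rw [hw]
    simpa using mul_nonneg hra hrb
  · have hcw : f (star a * b) = starRingEnd ℂ w := by
      rw [hwdef, ← map_star_eq hpos (star b * a), star_mul, star_star]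
    have key : ∀ t : ℝ, 0 ≤ (Complex.normSq w * (f (star b * b)).re) * (t * t)
        + (2 * Complex.normSq w) * t + (f (star a * a)).re := by
      intro t
      have hx := hpos (a + ((t : ℂ) * w) • b)
      have expand : star (a + ((t : ℂ) * w) • b) * (a + ((t : ℂ) * w) • b)
          = star a * a + ((t : ℂ) * w) • (star a * b)
            + (starRingEnd ℂ ((t : ℂ) * w)) • (star b * a)
            + (((t : ℂ) * w) * starRingEnd ℂ ((t : ℂ) * w)) • (star b * b) := by
        rw [star_add, star_smul]
        simp only [add_mul, mul_add, smul_mul_assoc, mul_smul_comm, smul_smul, smul_add]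
        rw [Complex.star_def]
        abel
      have hval : f (star (a + ((t : ℂ) * w) • b) * (a + ((t : ℂ) * w) • b))
          = f (star a * a) + ((2 * t * Complex.normSq w : ℝ) : ℂ)
            + ((t ^ 2 * Complex.normSq w : ℝ) : ℂ) * f (star b * b) := by
        rw [expand, map_add, map_add, map_add, map_smul, map_smul, map_smul, hcw, ← hwdef]
        simp only [smul_eq_mul, map_mul, Complex.conj_ofReal]
        push_cast
        linear_combination (2 * (t : ℂ) + (t : ℂ) ^ 2 * f (star b * b)) * Complex.mul_conj w
      rw [hval, Complex.nonneg_iff] at hx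
      have hx1 := hx.1
      simp only [Complex.add_re, Complex.ofReal_re, Complex.mul_re, Complex.ofReal_im,
        Complex.zero_re, zero_mul, sub_zero] at hx1
      nlinarith [hx1]
    have hd := discrim_le_zero key
    rw [discrim] at hd
    have hnsq : 0 < Complex.normSq w := Complex.normSq_pos.mpr hw
    have h4 : (2 * Complex.normSq w) ^ 2
        - 4 * (Complex.normSq w * (f (star b * b)).re) * (f (star a * a)).re ≤ 0 := hd
    rw [Complex.sq_norm]
    nlinarith [h4, hnsq]

lemma algebraMap_eq (r : ℝ) : algebraMap ℝ 𝔄 r = ((r : ℂ)) • (1 : 𝔄) := by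
  rw [IsScalarTower.algebraMap_apply ℝ ℂ 𝔄, Algebra.algebraMap_eq_smul_one,
    Complex.coe_algebraMap]

section Order

variable [PartialOrder 𝔄] [StarOrderedRing 𝔄]

lemma map_nonneg_of_nonneg (hpos : ∀ a : 𝔄, 0 ≤ f (star a * a)) {b : 𝔄} (hb : 0 ≤ b) :
    0 ≤ f b := by
  have hs : IsSelfAdjoint (CFC.sqrt b) := (CFC.sqrt_nonneg (a := b)).isSelfAdjoint
  have h1 : star (CFC.sqrt b) * CFC.sqrt b = b := by
    rw [hs.star_eq, ← sq, CFC.sq_sqrt b hb]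
  rw [← h1]
  exact hpos _

variable [Nontrivial 𝔄]

lemma state_map_one (hn : ‖f‖ = 1) (hpos : ∀ a : 𝔄, 0 ≤ f (star a * a)) : f 1 = 1 := by
  have h1 : 0 ≤ f 1 := by simpa using hpos 1
  obtain ⟨h1re, h1im⟩ := Complex.nonneg_iff.mp h1
  have hbound : ∀ a : 𝔄, (f (star a * a)).re ≤ (‖a‖ * ‖a‖) * (f 1).re := by
    intro a
    have hle : star a * a ≤ algebraMap ℝ 𝔄 ‖star a * a‖ :=
      IsSelfAdjoint.le_algebraMap_norm_self (IsSelfAdjoint.star_mul_self a)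
    have h2 : 0 ≤ f (algebraMap ℝ 𝔄 ‖star a * a‖ - star a * a) :=
      map_nonneg_of_nonneg hpos (sub_nonneg.mpr hle)
    rw [map_sub, algebraMap_eq, map_smul, smul_eq_mul, Complex.nonneg_iff] at h2
    have h3 := h2.1
    simp only [Complex.sub_re, Complex.mul_re, Complex.ofReal_re, Complex.ofReal_im,
      zero_mul, sub_zero, mul_one, Complex.one_re] at h3
    have h4 : ‖star a * a‖ = ‖a‖ * ‖a‖ := CStarRing.norm_star_mul_self
    rw [h4] at h3
    linarith
  have habs : ∀ a : 𝔄, ‖f a‖ ≤ (f 1).re * ‖a‖ := by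
    intro a
    have hcs := cauchy_schwarz hpos a 1
    rw [star_one, one_mul, one_mul] at hcs
    have hb := hbound a
    have := norm_nonneg (f a)
    nlinarith [norm_nonneg a, mul_nonneg h1re (norm_nonneg a)]
  have hub : (1 : ℝ) ≤ (f 1).re := by
    rw [← hn]
    exact f.opNorm_le_bound h1re (fun a => by
      simpa [mul_comm] using habs a)
  have hlb : (f 1).re ≤ 1 := by
    calc (f 1).re ≤ ‖f 1‖ := Complex.re_le_norm _
      _ = ‖f 1‖ := rfl
      _ ≤ ‖f‖ * ‖(1 : 𝔄)‖ := f.le_opNorm 1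
      _ = 1 := by rw [hn, norm_one, mul_one]
  exact Complex.ext (le_antisymm hlb hub) (by simpa using h1im.symm)

end Order

section NormPos

variable [Nontrivial 𝔄]

lemma im_eq_zero_of_norm (hn : ‖f‖ ≤ 1) (h1 : f 1 = 1) {h : 𝔄} (hh : IsSelfAdjoint h) :
    (f h).im = 0 := by
  have key : ∀ t : ℝ, 2 * (f h).im * t ≤ ‖h‖ ^ 2 := by
    intro t
    set c : ℂ := (t : ℂ) * Complex.I with hc
    set x : 𝔄 := h + c • 1 with hx
    have hstarc : star c = -c := by rw [hc, Complex.star_def]; simp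
    have hstarx : star x = h + (-c) • 1 := by
      rw [hx, star_add, star_smul, star_one, hh.star_eq, hstarc]
    have hsx : star x * x = h * h + ((t ^ 2 : ℝ) : ℂ) • 1 := by
      rw [hstarx, hx]
      have hcc : c * c = -((t ^ 2 : ℝ) : ℂ) := by
        rw [hc]; push_cast; linear_combination (t : ℂ) ^ 2 * Complex.I_sq
      simp only [add_mul, mul_add, smul_mul_assoc, mul_smul_comm, smul_smul, one_mul, mul_one,
        neg_smul, neg_mul, smul_add, neg_one_smul, smul_neg, hcc, neg_neg]
      abel
    have hnx : ‖x‖ ^ 2 ≤ ‖h‖ ^ 2 + t ^ 2 := by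
      have e1 : ‖x‖ * ‖x‖ = ‖star x * x‖ := (CStarRing.norm_star_mul_self).symm
      have e2 : ‖star x * x‖ ≤ ‖h‖ * ‖h‖ + t ^ 2 := by
        rw [hsx]
        refine le_trans (norm_add_le _ _) ?_
        gcongr
        · exact norm_mul_le h h
        · rw [norm_smul, norm_one, mul_one]
          simp [abs_of_nonneg (sq_nonneg t)]
      nlinarith [e1, e2]
    have hfx : f x = f h + (t : ℂ) * Complex.I := by
      rw [hx, map_add, map_smul, h1, smul_eq_mul, mul_one, hc]
    have habs : ‖f x‖ ^ 2 ≤ ‖h‖ ^ 2 + t ^ 2 := by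
      have h5 : ‖f x‖ ≤ ‖x‖ := by
        calc ‖f x‖ = ‖f x‖ := rfl
          _ ≤ ‖f‖ * ‖x‖ := f.le_opNorm x
          _ ≤ 1 * ‖x‖ := by gcongr
          _ = ‖x‖ := one_mul _
      nlinarith [norm_nonneg (f x), norm_nonneg x]
    rw [Complex.sq_norm, Complex.normSq_apply, hfx] at habs
    simp only [Complex.add_re, Complex.add_im, Complex.mul_re, Complex.mul_im,
      Complex.ofReal_re, Complex.ofReal_im, Complex.I_re, Complex.I_im] at habs
    nlinarith [habs, sq_nonneg ((f h).re)]
  by_contra him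
  have ht := key ((‖h‖ ^ 2 + 1) / (2 * (f h).im))
  have him' : 2 * (f h).im ≠ 0 := by
    intro hcon
    exact him (by linarith)
  rw [mul_div_cancel₀ _ him'] at ht
  linarith

variable [PartialOrder 𝔄] [StarOrderedRing 𝔄]

lemma pos_of_norm (hn : ‖f‖ ≤ 1) (h1 : f 1 = 1) (a : 𝔄) : 0 ≤ f (star a * a) := by
  suffices H : ∀ b : 𝔄, 0 ≤ b → 0 ≤ f b from H _ (star_mul_self_nonneg a)
  intro b hb
  have hsb : IsSelfAdjoint b := hb.isSelfAdjoint
  set c : 𝔄 := algebraMap ℝ 𝔄 ‖b‖ - b with hcdef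
  have hcsa : IsSelfAdjoint c := by
    rw [IsSelfAdjoint, hcdef, star_sub, hsb.star_eq, algebraMap_eq, star_smul, star_one]
    simp [Complex.star_def, Complex.conj_ofReal]
  have h0c : 0 ≤ c := sub_nonneg.mpr (IsSelfAdjoint.le_algebraMap_norm_self hsb)
  have hcle : c ≤ algebraMap ℝ 𝔄 ‖b‖ := by
    rw [hcdef]
    exact sub_le_self _ hb
  have hnc : ‖c‖ ≤ ‖b‖ := by
    calc ‖c‖ ≤ ‖algebraMap ℝ 𝔄 ‖b‖‖ := CStarAlgebra.norm_le_norm_of_nonneg_of_le h0c hcle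
      _ = ‖b‖ := by rw [norm_algebraMap', Real.norm_of_nonneg (norm_nonneg b)]
  have hfc_im : (f c).im = 0 := im_eq_zero_of_norm hn h1 hcsa
  have hfc_re : (f c).re ≤ ‖b‖ := by
    calc (f c).re ≤ ‖f c‖ := Complex.re_le_norm _
      _ = ‖f c‖ := rfl
      _ ≤ ‖f‖ * ‖c‖ := f.le_opNorm c
      _ ≤ 1 * ‖b‖ := by gcongr
      _ = ‖b‖ := one_mul _
  have hfb : f b = ((‖b‖ : ℝ) : ℂ) - f c := by
    rw [hcdef, map_sub, algebraMap_eq, map_smul, h1, smul_eq_mul, mul_one]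
    ring
  rw [hfb, Complex.nonneg_iff]
  constructor
  · simp only [Complex.sub_re, Complex.ofReal_re]
    linarith
  · simp [hfc_im]

end NormPos

theorem right_iff [PartialOrder 𝔄] [StarOrderedRing 𝔄] [Nontrivial 𝔄] (X : 𝔄) (lam : ℂ) :
    (¬ ∃ Y : 𝔄, (lam • (1 : 𝔄) - X) * Y = 1) ↔
      ∃ f : 𝔄 →L[ℂ] ℂ, IsState f ∧ lam = f X ∧
        f (X * star X) = f X * (starRingEnd ℂ) (f X) := by
  set T : 𝔄 := lam • (1 : 𝔄) - X with hT
  constructor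
  · intro hno
    set a : 𝔄 := T * star T with ha
    have hsa : IsSelfAdjoint a := IsSelfAdjoint.mul_star_self T
    haveI hnormal : IsStarNormal a := hsa.isStarNormal
    have hnotunit : ¬ IsUnit a := by
      rintro ⟨u, hu_eq⟩
      refine hno ⟨star T * ↑u⁻¹, ?_⟩
      rw [← mul_assoc, ← ha, ← hu_eq, Units.mul_inv]
    have hmem : (0 : ℂ) ∈ spectrum ℂ a := (spectrum.zero_mem_iff (R := ℂ)).mpr hnotunit
    obtain ⟨φ, hφ⟩ :=
      (StarAlgebra.elemental.bijective_characterSpaceToSpectrum a).surjective ⟨0, hmem⟩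
    have hφa : φ ⟨a, StarAlgebra.elemental.self_mem ℂ a⟩ = 0 := congrArg Subtype.val hφ
    have hφ_bd : ∀ y : StarAlgebra.elemental ℂ a, ‖φ y‖ ≤ ‖y‖ := by
      intro y
      exact spectrum.norm_le_norm_of_mem (AlgHom.apply_mem_spectrum φ y)
    set p : Submodule ℂ 𝔄 := Subalgebra.toSubmodule (StarAlgebra.elemental ℂ a).toSubalgebra
      with hp
    have hmem_iff : ∀ x : 𝔄, x ∈ p ↔ x ∈ StarAlgebra.elemental ℂ a := fun x => Iff.rfl
    let ψlin : p →ₗ[ℂ] ℂ :=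
      { toFun := fun x => φ ⟨x.1, x.2⟩
        map_add' := fun x y => map_add φ (⟨x.1, x.2⟩ : StarAlgebra.elemental ℂ a) ⟨y.1, y.2⟩
        map_smul' := fun c x => map_smul φ c (⟨x.1, x.2⟩ : StarAlgebra.elemental ℂ a) }
    let ψ : p →L[ℂ] ℂ := LinearMap.mkContinuous ψlin 1
      (fun x => by rw [one_mul]; exact hφ_bd ⟨x.1, x.2⟩)
    obtain ⟨g, hg_ext, hg_norm⟩ := exists_extension_norm_eq p ψ
    have h1mem : (1 : 𝔄) ∈ p := one_mem (StarAlgebra.elemental ℂ a)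
    have hamem : a ∈ p := StarAlgebra.elemental.self_mem ℂ a
    have hg1 : g 1 = 1 := by
      have := hg_ext ⟨1, h1mem⟩
      rw [this]
      exact map_one φ
    have hga : g a = 0 := by
      have := hg_ext ⟨a, hamem⟩
      rw [this]
      exact hφa
    have hψnorm : ‖ψ‖ = 1 := by
      refine le_antisymm (LinearMap.mkContinuous_norm_le ψlin zero_le_one _) ?_
      have h1 : ψ ⟨1, h1mem⟩ = 1 := map_one φ
      have h2 : ‖ψ ⟨1, h1mem⟩‖ ≤ ‖ψ‖ * ‖(⟨1, h1mem⟩ : p)‖ := ψ.le_opNorm _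
      have h3 : ‖(⟨1, h1mem⟩ : p)‖ = 1 := norm_one (α := 𝔄)
      rw [h1, h3, mul_one] at h2
      simpa using h2
    have hgnorm : ‖g‖ = 1 := hg_norm.trans hψnorm
    have hgpos : ∀ b : 𝔄, 0 ≤ g (star b * b) := pos_of_norm (le_of_eq hgnorm) hg1
    have hT0 : ∀ b : 𝔄, g (star b * star T) = 0 := by
      intro b
      have hcs := cauchy_schwarz hgpos (star T) b
      rw [star_star, ← ha, hga] at hcs
      simp only [Complex.zero_re, zero_mul] at hcs
      have habs := norm_nonneg (g (star b * star T))
      have : ‖g (star b * star T)‖ = 0 := by nlinarith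
      exact norm_eq_zero.mp this
    have hgT : g T = 0 := by
      have h0 := hT0 1
      rw [star_one, one_mul, map_star_eq hgpos] at h0
      have := congrArg (starRingEnd ℂ) h0
      simpa using this
    have hlam : lam = g X := by
      have : g T = lam * g 1 - g X := by rw [hT, map_sub, map_smul, smul_eq_mul]
      rw [hgT, hg1, mul_one] at this
      linear_combination -this
    have hstarT : star T = (starRingEnd ℂ lam) • (1 : 𝔄) - star X := by
      rw [hT, star_sub, star_smul, star_one, Complex.star_def]
    have hXX : g (X * star X) = g X * starRingEnd ℂ (g X) := by
      have h0 := hT0 (star X)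
      rw [star_star, hstarT, mul_sub, mul_smul_comm, mul_one, map_sub, map_smul,
        smul_eq_mul] at h0
      rw [← hlam] at h0 ⊢
      linear_combination -h0
    exact ⟨g, ⟨hgnorm, hgpos⟩, hlam, hXX⟩
  · rintro ⟨f, ⟨hfn, hfpos⟩, hlam, hXX⟩ ⟨Y, hY⟩
    have hf1 : f 1 = 1 := state_map_one hfn hfpos
    have hstarT : star T = (starRingEnd ℂ lam) • (1 : 𝔄) - star X := by
      rw [hT, star_sub, star_smul, star_one, Complex.star_def]
    have hTT : f (T * star T) = 0 := by
      have expand : T * star T = (starRingEnd ℂ lam * lam) • (1 : 𝔄)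
          - lam • star X - (starRingEnd ℂ lam) • X + X * star X := by
        rw [hT, hstarT]
        simp only [sub_mul, mul_sub, smul_mul_assoc, mul_smul_comm, smul_smul, mul_one, one_mul,
          smul_add, smul_sub, neg_smul]
        abel
      rw [expand, map_add, map_sub, map_sub, map_smul, map_smul, map_smul, hf1, hXX,
        smul_eq_mul, smul_eq_mul, smul_eq_mul, mul_one, map_star_eq hfpos X, ← hlam]
      ring
    have hcs := cauchy_schwarz hfpos Y (star T)
    rw [star_star, hY, hTT, hf1] at hcs
    simp only [Complex.zero_re, mul_zero, map_one, norm_one, one_pow] at hcs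
    linarith

end RLSpec

/-- `λ` is in the right spectrum of `X` iff `λ = f(X)` and `f(X X*) = |f(X)|²` for some state
`f`; and `λ` is in the left spectrum iff `λ = f(X)` and `f(X* X) = |f(X)|²` for some state `f`. -/
theorem mem_right_left_spectrum_iff_state {𝔄 : Type*} [CStarAlgebra 𝔄]
    (X : 𝔄) (lam : ℂ) :
    ((¬ ∃ Y : 𝔄, (lam • (1 : 𝔄) - X) * Y = 1) ↔
      ∃ f : 𝔄 →L[ℂ] ℂ, IsState f ∧ lam = f X ∧
        f (X * star X) = f X * (starRingEnd ℂ) (f X)) ∧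
    ((¬ ∃ Y : 𝔄, Y * (lam • (1 : 𝔄) - X) = 1) ↔
      ∃ f : 𝔄 →L[ℂ] ℂ, IsState f ∧ lam = f X ∧
        f (star X * X) = f X * (starRingEnd ℂ) (f X)) := by
  by_cases hnt : Nontrivial 𝔄
  · letI := CStarAlgebra.spectralOrder 𝔄
    haveI := CStarAlgebra.spectralOrderedRing 𝔄
    constructor
    · exact RLSpec.right_iff X lam
    · have hstarT : star (lam • (1 : 𝔄) - X) = (starRingEnd ℂ lam) • (1 : 𝔄) - star X := by
        rw [star_sub, star_smul, star_one, Complex.star_def]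
      have hiff : (∃ Y : 𝔄, Y * (lam • (1 : 𝔄) - X) = 1) ↔
          ∃ Z : 𝔄, ((starRingEnd ℂ lam) • (1 : 𝔄) - star X) * Z = 1 := by
        constructor
        · rintro ⟨Y, hY⟩
          exact ⟨star Y, by rw [← hstarT, ← star_mul, hY, star_one]⟩
        · rintro ⟨Z, hZ⟩
          refine ⟨star Z, ?_⟩
          have := congrArg star hZ
          rwa [star_mul, ← hstarT, star_star, star_one] at this
      rw [not_congr hiff, RLSpec.right_iff (star X) (starRingEnd ℂ lam)]
      constructor
      · rintro ⟨f, hf, h1, h2⟩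
        have hs : f (star X) = starRingEnd ℂ (f X) := RLSpec.map_star_eq hf.2 X
        refine ⟨f, hf, ?_, ?_⟩
        · rw [hs] at h1
          have := congrArg (starRingEnd ℂ) h1
          simpa using this
        · rw [star_star] at h2
          rw [h2, hs]
          simp only [Complex.conj_conj]
          ring
      · rintro ⟨f, hf, h1, h2⟩
        have hs : f (star X) = starRingEnd ℂ (f X) := RLSpec.map_star_eq hf.2 X
        refine ⟨f, hf, ?_, ?_⟩
        · rw [hs, ← h1]
        · rw [star_star, h2, hs]
          simp only [Complex.conj_conj]
          ring
  · rw [not_nontrivial_iff_subsingleton] at hnt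
    have hex : ∀ Y : 𝔄, (lam • (1 : 𝔄) - X) * Y = 1 := fun Y => Subsingleton.elim _ _
    have hnostate : ¬ ∃ f : 𝔄 →L[ℂ] ℂ, IsState f ∧ lam = f X ∧
        f (X * star X) = f X * (starRingEnd ℂ) (f X) := by
      rintro ⟨f, ⟨hfn, -⟩, -⟩
      have hf0 : f = 0 := by
        ext x
        rw [Subsingleton.elim x 0]
        simp
      rw [hf0, norm_zero] at hfn
      norm_num at hfn
    have hnostate' : ¬ ∃ f : 𝔄 →L[ℂ] ℂ, IsState f ∧ lam = f X ∧
        f (star X * X) = f X * (starRingEnd ℂ) (f X) := by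
      rintro ⟨f, ⟨hfn, -⟩, -⟩
      have hf0 : f = 0 := by
        ext x
        rw [Subsingleton.elim x 0]
        simp
      rw [hf0, norm_zero] at hfn
      norm_num at hfn
    exact ⟨iff_of_false (fun h => h ⟨0, hex 0⟩) hnostate,
      iff_of_false (fun h => h ⟨0, Subsingleton.elim _ _⟩) hnostate'⟩
end
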